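/- arXiv:1804.08999 — 4 statements merged into one kernel-verified Lean document; each statement's English description precedes it below -/
import Mathlib

section
/- Let f : ℝⁿ → ℝ be continuously differentiable and let x : [0,∞) → ℝⁿ be a gradient flow line of f, i.e. x is differentiable with x'(t) = ∇f(x(t)) for all t ≥ 0. Suppose there exist times tᵢ → ∞ such that x(tᵢ) → x_∞. Then: (i) lim_{t→∞} f(x(t)) = f(x_∞); (ii) x_∞ is a critical point of f, i.e. ∇f(x_∞) = 0; and (iii) ∫₀^∞ |x'(t)|² dt < ∞, and in fact this integral equals f(x_∞) − f(x(0)). -/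
/-! Along the flow `d/dt f (x t) = ‖∇f (x t)‖²`, so `f ∘ x` is nondecreasing; having the limit
`f xlim` along `t i`, it has that limit along the whole half-line, and the energy identity is the
fundamental theorem of calculus on `[0, ∞)`.

If `∇f xlim ≠ 0`, then `c / 2 < ‖∇f‖` on a ball around `xlim`, where `c = ‖∇f xlim‖`. Finite energy
makes the energy on `[s, s + 1]` small for large `s`, and by `‖v‖ ≤ ε + ‖v‖² / ε` this bounds the
displacement of `x` on that interval. Starting at a time `s` with `x s` close to `xlim`, the curve
therefore stays in the ball for unit time and collects energy at least `c² / 4`: a contradiction. -/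

open Filter Set MeasureTheory Topology

theorem MonotoneOn.tendsto_atTop_of_tendsto_comp {α β ι : Type*} [LinearOrder α]
    [LinearOrder β] [TopologicalSpace β] [OrderTopology β] {l : Filter ι} [l.NeBot]
    {g : α → β} {a : α} {L : β} {t : ι → α} (hg : MonotoneOn g (Ici a))
    (ht : Tendsto t l atTop) (hgt : Tendsto (g ∘ t) l (𝓝 L)) : Tendsto g atTop (𝓝 L) := by
  have hle : ∀ s ∈ Ici a, g s ≤ L := fun s hs =>
    ge_of_tendsto hgt <| (ht.eventually_ge_atTop (max a s)).mono fun i hi =>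
      hg hs (le_max_left a s |>.trans hi) (le_max_right a s |>.trans hi)
  refine tendsto_order.2 ⟨fun l' hl' => ?_, fun u hu => ?_⟩
  · obtain ⟨i, hi, hti⟩ :=
      ((tendsto_order.1 hgt).1 l' hl' |>.and (ht.eventually_ge_atTop a)).exists
    filter_upwards [eventually_ge_atTop (t i)] with s hs
    exact hi.trans_le (hg hti (hti.trans hs) hs)
  · filter_upwards [eventually_ge_atTop a] with s hs using (hle s hs).trans_lt hu

theorem tendsto_intervalIntegral_add_one_of_integrableOn_Ioi {E : Type*} [NormedAddCommGroup E]
    [NormedSpace ℝ E] {h : ℝ → E} {a : ℝ} (hh : IntegrableOn h (Ioi a)) :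
    Tendsto (fun s => ∫ u in s..s + 1, h u) atTop (𝓝 0) := by
  have hlim {b : ℝ → ℝ} (hb : Tendsto b atTop atTop) :=
    intervalIntegral_tendsto_integral_Ioi a hh hb
  have hdiff := (hlim (tendsto_atTop_add_const_right _ 1 tendsto_id)).sub (hlim tendsto_id)
  rw [sub_self] at hdiff
  refine hdiff.congr' ?_
  filter_upwards [eventually_ge_atTop a] with s hs
  have hint {b : ℝ} (hb : a ≤ b) : IntervalIntegrable h volume a b :=
    (intervalIntegrable_iff_integrableOn_Ioc_of_le hb).2 (hh.mono_set Ioc_subset_Ioi_self)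
  exact intervalIntegral.integral_interval_sub_left (hint (by linarith : a ≤ s + 1)) (hint hs)

section NormedSpace

variable {F : Type*} [NormedAddCommGroup F] [NormedSpace ℝ F] [CompleteSpace F]

theorem norm_sub_le_mul_add_integral_norm_sq_div {x x' : ℝ → F} {a b ε : ℝ} (hab : a ≤ b)
    (hε : 0 < ε) (hx : ∀ s ∈ Icc a b, HasDerivAt x (x' s) s) (hx' : ContinuousOn x' (Icc a b)) :
    ‖x b - x a‖ ≤ ε * (b - a) + (∫ s in a..b, ‖x' s‖ ^ 2) / ε := by
  have hint {g : F → ℝ} (hg : Continuous g) : IntervalIntegrable (fun s => g (x' s)) volume a b :=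
    (hg.comp_continuousOn hx').intervalIntegrable_of_Icc hab
  have hsq : IntervalIntegrable (fun s => ‖x' s‖ ^ 2) volume a b :=
    hint (g := fun v => ‖v‖ ^ 2) (by fun_prop)
  have hftc : ∫ s in a..b, x' s = x b - x a := by
    rw [← uIcc_of_le hab] at hx hx'
    exact intervalIntegral.integral_eq_sub_of_hasDerivAt hx hx'.intervalIntegrable
  have hamgm (r : ℝ) : r ≤ ε + r ^ 2 / ε := by
    rw [add_div' _ _ _ hε.ne', le_div_iff₀ hε]
    nlinarith [sq_nonneg (r - ε)]
  calc ‖x b - x a‖ = ‖∫ s in a..b, x' s‖ := by rw [hftc]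
    _ ≤ ∫ s in a..b, ‖x' s‖ := intervalIntegral.norm_integral_le_integral_norm hab
    _ ≤ ∫ s in a..b, (ε + ‖x' s‖ ^ 2 / ε) :=
      intervalIntegral.integral_mono_on hab (hint continuous_norm)
        (intervalIntegrable_const.add (hsq.div_const ε))
        fun s _ => hamgm ‖x' s‖
    _ = ε * (b - a) + (∫ s in a..b, ‖x' s‖ ^ 2) / ε := by
      rw [intervalIntegral.integral_add intervalIntegrable_const
        (hsq.div_const ε), intervalIntegral.integral_const,
        intervalIntegral.integral_div, smul_eq_mul, mul_comm]

theorem eq_zero_of_mapClusterPt_of_integrableOn_norm_sq {V : F → F} (hV : Continuous V)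
    {x : ℝ → F} {a : ℝ} (hx : ∀ s ∈ Ici a, HasDerivAt x (V (x s)) s)
    (henergy : IntegrableOn (fun s => ‖V (x s)‖ ^ 2) (Ioi a)) {p : F}
    (hp : MapClusterPt p atTop x) : V p = 0 := by
  by_contra hVp
  set c := ‖V p‖
  have hc : 0 < c := norm_pos_iff.2 hVp
  obtain ⟨δ, hδ, hball⟩ : ∃ δ > 0, ∀ {y}, dist y p < δ → c / 2 < ‖V y‖ :=
    Metric.eventually_nhds_iff.1 ((hV.norm.tendsto p).eventually (lt_mem_nhds (half_lt_self hc)))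
  obtain ⟨s, hsp, hsmall, has⟩ : ∃ s, dist (x s) p < δ / 2 ∧
      ∫ u in s..s + 1, ‖V (x u)‖ ^ 2 < min (c ^ 2 / 4) (δ ^ 2 / 16) ∧ a ≤ s :=
    (hp.frequently (Metric.ball_mem_nhds p (half_pos hδ))).and_eventually
      (((tendsto_intervalIntegral_add_one_of_integrableOn_Ioi henergy).eventually
        (gt_mem_nhds (by positivity))).and (eventually_ge_atTop a)) |>.exists
  have hVx : ContinuousOn (fun u => V (x u)) (Icc s (s + 1)) :=
    hV.comp_continuousOn fun u hu => (hx u (has.trans hu.1)).continuousAt.continuousWithinAt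
  have hint : IntervalIntegrable (fun u => ‖V (x u)‖ ^ 2) volume s (s + 1) :=
    (hVx.norm.pow 2).intervalIntegrable_of_Icc (by linarith)
  -- Small energy on `[s, s + 1]` keeps `x` inside the ball where `c / 2 < ‖V‖`.
  have hfar : ∀ u ∈ Icc s (s + 1), c / 2 < ‖V (x u)‖ := by
    intro u hu
    have hdisp := norm_sub_le_mul_add_integral_norm_sq_div (ε := δ / 4) hu.1 (by positivity)
      (fun v hv => hx v (has.trans hv.1)) (hVx.mono (Icc_subset_Icc_right hu.2))
    have henergy_le : ∫ v in s..u, ‖V (x v)‖ ^ 2 ≤ ∫ v in s..s + 1, ‖V (x v)‖ ^ 2 :=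
      intervalIntegral.integral_mono_interval le_rfl hu.1 hu.2
        (ae_of_all _ fun _ => sq_nonneg _) hint
    have hquot : (∫ v in s..u, ‖V (x v)‖ ^ 2) / (δ / 4) < δ / 4 := by
      rw [div_lt_iff₀ (by positivity)]
      linarith [min_le_right (c ^ 2 / 4) (δ ^ 2 / 16)]
    have hlin : δ / 4 * (u - s) ≤ δ / 4 :=
      mul_le_of_le_one_right (by positivity) (by linarith [hu.2])
    apply hball
    calc dist (x u) p ≤ ‖x u - x s‖ + dist (x s) p := by
          rw [← dist_eq_norm]; exact dist_triangle _ _ _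
      _ < δ := by linarith
  have hlower : c ^ 2 / 4 ≤ ∫ u in s..s + 1, ‖V (x u)‖ ^ 2 := by
    have := intervalIntegral.integral_mono_on (by linarith) intervalIntegrable_const hint
      fun u hu => show (c / 2) ^ 2 ≤ ‖V (x u)‖ ^ 2 from
        pow_le_pow_left₀ (by positivity) (hfar u hu).le 2
    simp only [intervalIntegral.integral_const, add_sub_cancel_left, one_smul] at this
    linarith
  linarith [min_le_left (c ^ 2 / 4) (δ ^ 2 / 16)]

end NormedSpace

section InnerProductSpace

variable {E : Type*} [NormedAddCommGroup E] [InnerProductSpace ℝ E] [CompleteSpace E]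

theorem ContDiff.continuous_gradient {f : E → ℝ} (hf : ContDiff ℝ 1 f) :
    Continuous (gradient f) :=
  (InnerProductSpace.toDual ℝ E).symm.continuous.comp (hf.continuous_fderiv one_ne_zero)

theorem HasGradientAt.comp_hasDerivAt {f : E → ℝ} {f' v : E} {x : ℝ → E} {s : ℝ}
    (hf : HasGradientAt f f' (x s)) (hx : HasDerivAt x v s) :
    HasDerivAt (f ∘ x) (inner ℝ f' v) s := by
  simpa using hf.hasFDerivAt.comp_hasDerivAt s hx

end InnerProductSpace

/-- A gradient flow line of a `C¹` function with a limit point `xlim` satisfies: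
(i) `f ∘ x → f xlim`; (ii) `xlim` is a critical point; (iii) `∫₀^∞ |x'|² = f xlim − f (x 0) < ∞`. -/
theorem gradient_flow_line_limit_point
    {n : ℕ} (f : EuclideanSpace ℝ (Fin n) → ℝ) (hf : ContDiff ℝ 1 f)
    (x : ℝ → EuclideanSpace ℝ (Fin n))
    (hx : ∀ t : ℝ, 0 ≤ t → HasDerivAt x (gradient f (x t)) t)
    (t : ℕ → ℝ) (ht : Tendsto t atTop atTop)
    (xlim : EuclideanSpace ℝ (Fin n))
    (hlim : Tendsto (fun i => x (t i)) atTop (nhds xlim)) :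
    Tendsto (fun s => f (x s)) atTop (nhds (f xlim)) ∧
    gradient f xlim = 0 ∧
    IntegrableOn (fun s => ‖gradient f (x s)‖ ^ 2) (Ici (0 : ℝ)) ∧
    ∫ s in Ici (0 : ℝ), ‖gradient f (x s)‖ ^ 2 = f xlim - f (x 0) := by
  have hderiv : ∀ s ∈ Ici (0 : ℝ), HasDerivAt (f ∘ x) (‖gradient f (x s)‖ ^ 2) s := fun s hs => by
    simpa [real_inner_self_eq_norm_sq] using
      ((hf.differentiable one_ne_zero _).hasGradientAt).comp_hasDerivAt (hx s hs)
  have hmono : MonotoneOn (f ∘ x) (Ici 0) :=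
    monotoneOn_of_hasDerivWithinAt_nonneg (convex_Ici 0)
      (fun s hs => (hderiv s hs).continuousAt.continuousWithinAt)
      (fun s hs => (hderiv s (interior_subset hs)).hasDerivWithinAt) fun _ _ => sq_nonneg _
  have hvalue : Tendsto (f ∘ x) atTop (𝓝 (f xlim)) :=
    hmono.tendsto_atTop_of_tendsto_comp ht ((hf.continuous.tendsto xlim).comp hlim)
  have henergy : IntegrableOn (fun s => ‖gradient f (x s)‖ ^ 2) (Ioi 0) :=
    integrableOn_Ioi_deriv_of_nonneg' hderiv (fun _ _ => sq_nonneg _) hvalue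
  refine ⟨hvalue, ?_, (integrableOn_Ici_iff_integrableOn_Ioi).2 henergy, ?_⟩
  · exact eq_zero_of_mapClusterPt_of_integrableOn_norm_sq hf.continuous_gradient hx henergy
      (hlim.mapClusterPt.of_comp ht)
  · rw [integral_Ici_eq_integral_Ioi]
    exact integral_Ioi_of_hasDerivAt_of_nonneg' hderiv (fun _ _ => sq_nonneg _) hvalue
end

section
/- For every Λ > 1, the integral of |γ''| over the interval [s, Λs] tends to zero as s → 0⁺: lim_{s→0⁺} ∫_s^{Λs} |γ''(σ)| dσ = 0 (where the integral is taken for s small enough that Λs ≤ s₀). -/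
/-!
Let `x₀ = γ 0` and `B = Hess u (x₀)`. As `∇u ≠ 0` on `∂Ω`, the critical point `x₀` is interior,
and rescaling the arrival time equation along the rays `x₀ + t v` gives
`⟪B (B v), B v⟫ = (1 + Δu(x₀)) ‖B v‖²`; for the symmetric `B` this forces `B² = (1 + Δu(x₀)) B`,
so in particular `1 + Δu(x₀) ≠ 0`.

Along the flow line, the arrival time equation says that `f = |∇u ∘ γ|` has derivative
`-(1 + Δu ∘ γ)`, so `f(σ) ~ -(1 + Δu(x₀)) σ`, while
`γ'' = f⁻² (Hess u(γ) ∇u(γ) - (1 + Δu(γ)) ∇u(γ))`. Writing `∇u(γ σ) = B (γ σ - x₀) + o(σ)` and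
using `B² = (1 + Δu(x₀)) B`, the bracket is `o(σ)`; hence `σ |γ''(σ)| → 0`, and
`∫_s^{Λs} |γ''| ≤ (Λ - 1) sup_{[s, Λs]} σ |γ''(σ)|` tends to `0`.
-/

open Filter Set MeasureTheory
open scoped RealInnerProductSpace

/-- The Hessian of `u` at `x`, as the derivative of the gradient. -/
noncomputable def hess {m : ℕ} (u : EuclideanSpace ℝ (Fin m) → ℝ)
    (x : EuclideanSpace ℝ (Fin m)) :
    EuclideanSpace ℝ (Fin m) →L[ℝ] EuclideanSpace ℝ (Fin m) :=
  fderiv ℝ (gradient u) x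

/-- The Laplacian of `u` at `x`, as the trace of the Hessian. -/
noncomputable def lap {m : ℕ} (u : EuclideanSpace ℝ (Fin m) → ℝ)
    (x : EuclideanSpace ℝ (Fin m)) : ℝ :=
  LinearMap.trace ℝ _ (hess u x : EuclideanSpace ℝ (Fin m) →ₗ[ℝ] EuclideanSpace ℝ (Fin m))

open Topology

theorem LinearMap.IsSymmetric.apply_apply_eq_smul_apply {E : Type*} [NormedAddCommGroup E]
    [InnerProductSpace ℝ E] {T : E →ₗ[ℝ] E} (hT : T.IsSymmetric) {c : ℝ}
    (h : ∀ x, ⟪T (T x), T x⟫ = c * ‖T x‖ ^ 2) (x : E) : T (T x) = c • T x := by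
  set C := T - c • LinearMap.id
  have hCsymm : C.IsSymmetric := hT.sub (LinearMap.IsSymmetric.id.smul (by simp))
  have hC : ∀ x, ⟪C (T x), T x⟫ = 0 := fun x => by
    simp [C, inner_sub_left, real_inner_smul_left, h]
  -- the form `⟪C ·, ·⟫` vanishes on the range of `T`, hence the symmetric map `T ∘ C ∘ T` is zero
  have hTCT : ∀ x, T (C (T x)) = 0 := by
    have hsymm : (T ∘ₗ C ∘ₗ T).IsSymmetric := fun x y => by
      simp only [LinearMap.comp_apply, hT _, hCsymm _]
    have := hsymm.inner_map_self_eq_zero.1 fun x => by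
      simpa only [LinearMap.comp_apply, hT _] using hC x
    exact fun x => LinearMap.congr_fun this x
  have : ⟪C (T x), C (T x)⟫ = 0 := calc
    _ = ⟪T (C (T x)), T x⟫ - c * ⟪C (T x), T x⟫ := by
      rw [hT, ← real_inner_smul_right, ← inner_sub_right]; rfl
    _ = 0 := by rw [hTCT, hC]; simp
  simpa [C, sub_eq_zero] using inner_self_eq_zero.1 this

section InnerProductSpace
variable {E : Type*} [NormedAddCommGroup E] [InnerProductSpace ℝ E]

theorem HasFDerivAt.inner_apply_apply_eq_mul_norm_sq {G : E → E} {B : E →L[ℝ] E}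
    {H : E → E →L[ℝ] E} {L : E → ℝ} {x₀ : E} (hG : HasFDerivAt G B x₀) (hG₀ : G x₀ = 0)
    (hH : ContinuousAt H x₀) (hL : ContinuousAt L x₀)
    (heq : ∀ᶠ x in 𝓝 x₀, ⟪H x (G x), G x⟫ = L x * ‖G x‖ ^ 2) (v : E) :
    ⟪H x₀ (B v), B v⟫ = L x₀ * ‖B v‖ ^ 2 := by
  have hline : Tendsto (fun t : ℝ => x₀ + t • v) (𝓝[≠] 0) (𝓝 x₀) := by
    refine tendsto_nhdsWithin_of_tendsto_nhds ?_
    have : Continuous fun t : ℝ => x₀ + t • v := by fun_prop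
    simpa using this.tendsto 0
  have hslope : Tendsto (fun t : ℝ => t⁻¹ • G (x₀ + t • v)) (𝓝[≠] 0) (𝓝 (B v)) := by
    simpa [hG₀] using (hG.hasLineDerivAt v).tendsto_slope_zero
  -- the identity is homogeneous of degree two in `G`, so it survives the rescaling by `t⁻¹`
  have hscaled : ∀ᶠ t in 𝓝[≠] (0 : ℝ),
      ⟪H (x₀ + t • v) (t⁻¹ • G (x₀ + t • v)), t⁻¹ • G (x₀ + t • v)⟫
        = L (x₀ + t • v) * ‖t⁻¹ • G (x₀ + t • v)‖ ^ 2 := by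
    filter_upwards [hline.eventually heq] with t ht
    rw [map_smul, real_inner_smul_left, real_inner_smul_right, ht, norm_smul, mul_pow,
      Real.norm_eq_abs, sq_abs]
    ring
  refine tendsto_nhds_unique (Tendsto.congr' hscaled ?_) ?_
  · exact ((isBoundedBilinearMap_apply.continuous.tendsto _).comp
      ((hH.tendsto.comp hline).prodMk_nhds hslope)).inner hslope
  · exact (hL.tendsto.comp hline).mul (hslope.norm.pow 2)

theorem norm_apply_sub_smul_le {B H : E →L[ℝ] E} {c L : ℝ} {g v : E} (hB : B (B v) = c • B v) :
    ‖H g - L • g‖ ≤ (‖H - B‖ + |L - c|) * ‖g‖ + (‖B‖ + |c|) * ‖g - B v‖ := by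
  have hsplit : H g - L • g = ((H - B) g - (L - c) • g) + (B (g - B v) - c • (g - B v)) := by
    simp only [sub_apply, map_sub, hB, sub_smul, smul_sub]
    abel
  rw [hsplit]
  refine (norm_add_le _ _).trans (add_le_add ?_ ?_)
  · refine (norm_sub_le _ _).trans ?_
    rw [add_mul, norm_smul, Real.norm_eq_abs]
    gcongr
    exact (H - B).le_opNorm g
  · refine (norm_sub_le _ _).trans ?_
    rw [add_mul, norm_smul, Real.norm_eq_abs]
    gcongr
    exact B.le_opNorm _

theorem tendsto_mul_norm_inv_sq_smul_apply_sub_smul {l : Filter ℝ} {g v : ℝ → E}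
    {H : ℝ → E →L[ℝ] E} {L : ℝ → ℝ} {B : E →L[ℝ] E} {c a : ℝ} (hB : ∀ w, B (B w) = c • B w)
    (hH : Tendsto H l (𝓝 B)) (hL : Tendsto L l (𝓝 c))
    (hg : Tendsto (fun σ => ‖g σ‖ / σ) l (𝓝 a)) (ha : a ≠ 0)
    (hv : Tendsto (fun σ => ‖g σ - B (v σ)‖ / σ) l (𝓝 0)) :
    Tendsto (fun σ => σ * ‖(‖g σ‖⁻¹ ^ 2) • (H σ (g σ) - L σ • g σ)‖) l (𝓝 0) := by
  have hbound : ∀ σ, ‖σ * ‖(‖g σ‖⁻¹ ^ 2) • (H σ (g σ) - L σ • g σ)‖‖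
      ≤ |σ / ‖g σ‖| * (‖H σ - B‖ + |L σ - c|)
        + (σ / ‖g σ‖) ^ 2 * (‖B‖ + |c|) * |‖g σ - B (v σ)‖ / σ| := by
    intro σ
    rcases eq_or_ne σ 0 with rfl | hσ
    · simp only [zero_mul, norm_zero]; positivity
    rcases eq_or_ne (g σ) 0 with hgσ | hgσ
    · simp only [hgσ, norm_zero, inv_zero]; simp
    have hgpos : 0 < ‖g σ‖ := norm_pos_iff.2 hgσ
    calc ‖σ * ‖(‖g σ‖⁻¹ ^ 2) • (H σ (g σ) - L σ • g σ)‖‖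
        = |σ| / ‖g σ‖ ^ 2 * ‖H σ (g σ) - L σ • g σ‖ := by
          rw [norm_mul, norm_norm, norm_smul, norm_pow, norm_inv, norm_norm, Real.norm_eq_abs]
          ring
      _ ≤ |σ| / ‖g σ‖ ^ 2 * ((‖H σ - B‖ + |L σ - c|) * ‖g σ‖
            + (‖B‖ + |c|) * ‖g σ - B (v σ)‖) := by
          gcongr; exact norm_apply_sub_smul_le (hB _)
      _ = _ := by
          rw [abs_div, abs_div, abs_norm, abs_norm, div_pow]
          field_simp
          rw [sq_abs]; ring
  have hr : Tendsto (fun σ => σ / ‖g σ‖) l (𝓝 a⁻¹) := by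
    simpa only [inv_div] using hg.inv₀ ha
  have hHB : Tendsto (fun σ => ‖H σ - B‖) l (𝓝 0) := by
    simpa using (hH.sub_const B).norm
  have hLc : Tendsto (fun σ => |L σ - c|) l (𝓝 0) := by
    simpa using (hL.sub_const c).abs
  refine squeeze_zero_norm hbound ?_
  simpa using (hr.abs.mul (hHB.add hLc)).add (((hr.pow 2).mul_const _).mul hv.abs)

end InnerProductSpace

section NormalizedFlow
variable {E : Type*} [NormedAddCommGroup E] [InnerProductSpace ℝ E] {G : E → E} {H : E →L[ℝ] E}
  {γ : ℝ → E} {σ c : ℝ}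

theorem HasFDerivAt.hasDerivAt_comp_normalizedFlow (hG : HasFDerivAt G H (γ σ))
    (hγ : HasDerivAt γ (-(‖G (γ σ)‖⁻¹ • G (γ σ))) σ) :
    HasDerivAt (fun t => G (γ t)) (-(‖G (γ σ)‖⁻¹ • H (G (γ σ)))) σ :=
  (hG.comp_hasDerivAt σ hγ).congr_deriv (by simp)

theorem HasFDerivAt.hasDerivAt_norm_comp_normalizedFlow (hG : HasFDerivAt G H (γ σ))
    (hγ : HasDerivAt γ (-(‖G (γ σ)‖⁻¹ • G (γ σ))) σ) (h0 : G (γ σ) ≠ 0)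
    (heq : ⟪H (G (γ σ)), G (γ σ)⟫ = c * ‖G (γ σ)‖ ^ 2) :
    HasDerivAt (fun t => ‖G (γ t)‖) (-c) σ := by
  have hsqrt := (hG.hasDerivAt_comp_normalizedFlow hγ).norm_sq.sqrt (by positivity)
  simp only [Real.sqrt_sq (norm_nonneg _)] at hsqrt
  convert hsqrt using 1
  rw [inner_neg_right, real_inner_smul_right, real_inner_comm, heq]
  field_simp

theorem HasFDerivAt.hasDerivAt_normalizedFlow_velocity (hG : HasFDerivAt G H (γ σ))
    (hγ : HasDerivAt γ (-(‖G (γ σ)‖⁻¹ • G (γ σ))) σ) (h0 : G (γ σ) ≠ 0)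
    (heq : ⟪H (G (γ σ)), G (γ σ)⟫ = c * ‖G (γ σ)‖ ^ 2) :
    HasDerivAt (fun t => -(‖G (γ t)‖⁻¹ • G (γ t)))
      ((‖G (γ σ)‖⁻¹) ^ 2 • (H (G (γ σ)) - c • G (γ σ))) σ := by
  have hnorm := (hG.hasDerivAt_norm_comp_normalizedFlow hγ h0 heq).inv (norm_ne_zero_iff.2 h0)
  refine ((hnorm.smul (hG.hasDerivAt_comp_normalizedFlow hγ)).neg).congr_deriv ?_
  simp only [Pi.inv_apply, smul_neg, neg_neg, smul_sub, smul_smul, neg_add]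
  match_scalars <;> field_simp

end NormalizedFlow

theorem ContinuousOn.tendsto_nhdsGT_of_Icc {α : Type*} [TopologicalSpace α] {f : ℝ → α} {a b : ℝ}
    (hab : a < b) (hf : ContinuousOn f (Icc a b)) : Tendsto f (𝓝[>] a) (𝓝 (f a)) :=
  (hf a (left_mem_Icc.2 hab.le)).tendsto.mono_left (nhdsWithin_le_of_mem (Icc_mem_nhdsGT hab))

theorem norm_sub_le_of_norm_hasDerivAt_le_Ioc {E : Type*} [NormedAddCommGroup E] [NormedSpace ℝ E]
    {f f' : ℝ → E} {a b C : ℝ} (hab : a ≤ b) (hf : ContinuousOn f (Icc a b))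
    (hf' : ∀ x ∈ Ioc a b, HasDerivAt f (f' x) x) (bound : ∀ x ∈ Ioc a b, ‖f' x‖ ≤ C) :
    ‖f b - f a‖ ≤ C * (b - a) := by
  -- run through `[a, b]` backwards, so that the missing derivative at `a` sits at the right end
  have hmaps : MapsTo (fun t => a + b - t) (Icc a b) (Icc a b) := fun t ht =>
    ⟨by linarith [ht.2], by linarith [ht.1]⟩
  have key := norm_image_sub_le_of_norm_deriv_right_le_segment (f := fun t => f (a + b - t))
    (f' := fun t => -f' (a + b - t)) (hf.comp (by fun_prop) hmaps)
    (fun t ht => by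
      have ht' : a + b - t ∈ Ioc a b := ⟨by linarith [ht.2], by linarith [ht.1]⟩
      exact ((hf' _ ht').scomp t ((hasDerivAt_id t).const_sub (a + b))).hasDerivWithinAt
        |>.congr_deriv (by simp))
    (fun t ht => by simpa using bound _ ⟨by linarith [ht.2], by linarith [ht.1]⟩)
    b ⟨hab, le_rfl⟩
  simpa [norm_sub_rev] using key

theorem tendsto_intervalIntegral_mul_of_tendsto_smul {E : Type*} [NormedAddCommGroup E]
    [NormedSpace ℝ E] {h : ℝ → E} {Λ : ℝ} (hΛ : 1 ≤ Λ)
    (h0 : Tendsto (fun σ => σ • h σ) (𝓝[>] 0) (𝓝 0)) :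
    Tendsto (fun s => ∫ σ in s..Λ * s, h σ) (𝓝[>] 0) (𝓝 0) := by
  rw [Metric.tendsto_nhds]
  intro ε hε
  have hΛ₀ : 0 < Λ := by linarith
  obtain ⟨b, hb, hsmall⟩ := mem_nhdsGT_iff_exists_Ioo_subset.1
    ((Metric.tendsto_nhds.1 h0) (ε / Λ) (by positivity))
  filter_upwards [Ioo_mem_nhdsGT (div_pos hb hΛ₀)] with s ⟨hs, hsb⟩
  have hbound : ∀ σ ∈ uIoc s (Λ * s), ‖h σ‖ ≤ ε / Λ / s := fun σ hσ => by
    rw [uIoc_of_le (by nlinarith)] at hσ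
    have hσ₀ : 0 < σ := hs.trans hσ.1
    have hσb : σ < b := by rw [lt_div_iff₀ hΛ₀] at hsb; nlinarith [hσ.2]
    have := hsmall ⟨hσ₀, hσb⟩
    simp only [mem_ofPred_eq, dist_zero_right, norm_smul, Real.norm_of_nonneg hσ₀.le] at this
    calc ‖h σ‖ ≤ ε / Λ / σ := by rw [le_div_iff₀ hσ₀]; linarith
      _ ≤ ε / Λ / s := by gcongr; exact hσ.1.le
  rw [dist_zero_right]
  calc ‖∫ σ in s..Λ * s, h σ‖ ≤ ε / Λ / s * |Λ * s - s| :=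
        intervalIntegral.norm_integral_le_of_norm_le_const hbound
    _ = ε * (1 - Λ⁻¹) := by
        rw [abs_of_nonneg (by nlinarith)]; field_simp
    _ < ε := mul_lt_of_lt_one_right hε (sub_lt_self 1 (inv_pos.2 hΛ₀))

section Hessian
variable {m : ℕ} {u : EuclideanSpace ℝ (Fin m) → ℝ} {x : EuclideanSpace ℝ (Fin m)}

theorem ContDiffAt.contDiffAt_gradient (hu : ContDiffAt ℝ 2 u x) :
    ContDiffAt ℝ 1 (gradient u) x :=
  (InnerProductSpace.toDual ℝ _).symm.contDiff.contDiffAt.comp x (hu.fderiv_right le_rfl)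

theorem ContDiffAt.hasFDerivAt_gradient (hu : ContDiffAt ℝ 2 u x) :
    HasFDerivAt (gradient u) (hess u x) x :=
  (hu.contDiffAt_gradient.differentiableAt one_ne_zero).hasFDerivAt

theorem ContDiffAt.continuousAt_hess (hu : ContDiffAt ℝ 2 u x) : ContinuousAt (hess u) x :=
  hu.contDiffAt_gradient.continuousAt_fderiv one_ne_zero

theorem ContDiffAt.continuousAt_lap (hu : ContDiffAt ℝ 2 u x) : ContinuousAt (lap u) x :=
  (LinearMap.continuous_of_finiteDimensional
    ((LinearMap.trace ℝ (EuclideanSpace ℝ (Fin m))).comp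
      (ContinuousLinearMap.coeLM ℝ))).continuousAt.comp hu.continuousAt_hess

theorem ContDiffAt.isSymmetric_hess (hu : ContDiffAt ℝ 2 u x) :
    (hess u x : EuclideanSpace ℝ (Fin m) →ₗ[ℝ] EuclideanSpace ℝ (Fin m)).IsSymmetric := by
  have hsnd : ∀ v w, ⟪hess u x v, w⟫ = fderiv ℝ (fderiv ℝ u) x v w := fun v w => by
    have hpair : HasFDerivAt (fun y => ⟪gradient u y, w⟫)
        (fderiv ℝ (fderiv ℝ u) x |>.flip w) x := by
      simp_rw [inner_gradient_left]
      simpa using ((hu.fderiv_right le_rfl).differentiableAt one_ne_zero).hasFDerivAt.clm_apply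
        (hasFDerivAt_const w x)
    simpa using (hu.hasFDerivAt_gradient.inner ℝ (hasFDerivAt_const w x)).unique hpair |>
      congrArg (· v)
  intro v w
  rw [ContinuousLinearMap.coe_coe, hsnd, hu.isSymmSndFDerivAt (by simp), ← hsnd, real_inner_comm]

theorem ContDiffAt.hess_apply_hess_apply_of_gradient_eq_zero (hu : ContDiffAt ℝ 2 u x)
    (hcrit : gradient u x = 0)
    (harr : ∀ᶠ y in 𝓝 x, ⟪hess u y (gradient u y), gradient u y⟫
      = (1 + lap u y) * ‖gradient u y‖ ^ 2) (v : EuclideanSpace ℝ (Fin m)) :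
    hess u x (hess u x v) = (1 + lap u x) • hess u x v :=
  hu.isSymmetric_hess.apply_apply_eq_smul_apply (fun w =>
    hu.hasFDerivAt_gradient.inner_apply_apply_eq_mul_norm_sq hcrit hu.continuousAt_hess
      (continuousAt_const.add hu.continuousAt_lap) harr w) v

theorem ContDiffAt.one_add_lap_ne_zero (hu : ContDiffAt ℝ 2 u x)
    (hB : ∀ v, hess u x (hess u x v) = (1 + lap u x) • hess u x v) : 1 + lap u x ≠ 0 := by
  intro hc
  have hzero : hess u x = 0 := by
    ext1 v
    rw [zero_apply, ← inner_self_eq_zero (𝕜 := ℝ)]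
    have := hu.isSymmetric_hess v (hess u x v)
    simp only [ContinuousLinearMap.coe_coe] at this
    rw [this, hB, hc, zero_smul, inner_zero_right]
  have hlap : lap u x = 0 := by simp [lap, hzero]
  simp [hlap] at hc

end Hessian

section FlowLine
variable {m : ℕ} {u : EuclideanSpace ℝ (Fin m) → ℝ} {γ : ℝ → EuclideanSpace ℝ (Fin m)} {s₀ : ℝ}

theorem deriv_deriv_eq_of_normalizedGradientFlow
    (hu : ∀ σ ∈ Ioc 0 s₀, ContDiffAt ℝ 2 u (γ σ))
    (hγgrad : ∀ σ ∈ Ioc 0 s₀, gradient u (γ σ) ≠ 0)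
    (hγderiv : ∀ σ ∈ Ioc 0 s₀,
      HasDerivAt γ (-(‖gradient u (γ σ)‖⁻¹ • gradient u (γ σ))) σ)
    (harr : ∀ σ ∈ Ioc 0 s₀, ⟪hess u (γ σ) (gradient u (γ σ)), gradient u (γ σ)⟫
      = (1 + lap u (γ σ)) * ‖gradient u (γ σ)‖ ^ 2)
    {σ : ℝ} (hσ : σ ∈ Ioo 0 s₀) :
    deriv (deriv γ) σ = (‖gradient u (γ σ)‖⁻¹) ^ 2 •
      (hess u (γ σ) (gradient u (γ σ)) - (1 + lap u (γ σ)) • gradient u (γ σ)) := by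
  have hvel : deriv γ =ᶠ[𝓝 σ] fun t => -(‖gradient u (γ t)‖⁻¹ • gradient u (γ t)) := by
    filter_upwards [Ioo_mem_nhds hσ.1 hσ.2] with t ht using (hγderiv t ⟨ht.1, ht.2.le⟩).deriv
  have hσ' : σ ∈ Ioc 0 s₀ := Ioo_subset_Ioc_self hσ
  rw [hvel.deriv_eq]
  exact ((hu σ hσ').hasFDerivAt_gradient.hasDerivAt_normalizedFlow_velocity (hγderiv σ hσ')
    (hγgrad σ hσ') (harr σ hσ')).deriv

theorem tendsto_norm_gradient_comp_div_of_normalizedGradientFlow (hs₀ : 0 < s₀)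
    (hu : ∀ σ ∈ Icc 0 s₀, ContDiffAt ℝ 2 u (γ σ)) (hγcont : ContinuousOn γ (Icc 0 s₀))
    (hcrit : gradient u (γ 0) = 0) (hγgrad : ∀ σ ∈ Ioc 0 s₀, gradient u (γ σ) ≠ 0)
    (hγderiv : ∀ σ ∈ Ioc 0 s₀,
      HasDerivAt γ (-(‖gradient u (γ σ)‖⁻¹ • gradient u (γ σ))) σ)
    (harr : ∀ σ ∈ Ioc 0 s₀, ⟪hess u (γ σ) (gradient u (γ σ)), gradient u (γ σ)⟫
      = (1 + lap u (γ σ)) * ‖gradient u (γ σ)‖ ^ 2) :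
    Tendsto (fun σ => ‖gradient u (γ σ)‖ / σ) (𝓝[>] 0) (𝓝 (-(1 + lap u (γ 0)))) := by
  have hγ₀ := hγcont.tendsto_nhdsGT_of_Icc hs₀
  have hu₀ := hu 0 (left_mem_Icc.2 hs₀.le)
  refine HasDerivAt.lhopital_zero_right_on_Ioo (f' := fun σ => -(1 + lap u (γ σ)))
    (g' := fun _ => 1) hs₀ (fun σ hσ => ?_) (fun σ _ => hasDerivAt_id σ) (fun _ _ => one_ne_zero)
    ?_ (tendsto_nhdsWithin_of_tendsto_nhds tendsto_id) ?_
  · have hσ' : σ ∈ Ioc 0 s₀ := Ioo_subset_Ioc_self hσ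
    exact (hu σ (Ioc_subset_Icc_self hσ')).hasFDerivAt_gradient
      |>.hasDerivAt_norm_comp_normalizedFlow (hγderiv σ hσ') (hγgrad σ hσ') (harr σ hσ')
  · simpa [hcrit] using (hu₀.contDiffAt_gradient.continuousAt.tendsto.comp hγ₀).norm
  · simpa using ((continuousAt_const.add hu₀.continuousAt_lap).tendsto.comp hγ₀).neg

theorem tendsto_norm_gradient_comp_sub_hess_div_of_normalizedGradientFlow (hs₀ : 0 < s₀)
    (hu₀ : ContDiffAt ℝ 2 u (γ 0)) (hγcont : ContinuousOn γ (Icc 0 s₀))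
    (hcrit : gradient u (γ 0) = 0)
    (hγderiv : ∀ σ ∈ Ioc 0 s₀,
      HasDerivAt γ (-(‖gradient u (γ σ)‖⁻¹ • gradient u (γ σ))) σ) :
    Tendsto (fun σ => ‖gradient u (γ σ) - hess u (γ 0) (γ σ - γ 0)‖ / σ) (𝓝[>] 0) (𝓝 0) := by
  have hunit : ∀ σ, ‖-(‖gradient u (γ σ)‖⁻¹ • gradient u (γ σ))‖ ≤ 1 := fun σ => by
    rw [norm_neg, norm_smul, norm_inv, norm_norm]
    exact inv_mul_le_one_of_le₀ le_rfl (norm_nonneg _)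
  have hspeed : (fun σ => γ σ - γ 0) =O[𝓝[>] 0] fun σ => σ := by
    refine Asymptotics.IsBigO.of_bound 1 ?_
    filter_upwards [Ioc_mem_nhdsGT hs₀] with σ hσ
    simpa [abs_of_pos hσ.1] using norm_sub_le_of_norm_hasDerivAt_le_Ioc hσ.1.le
      (hγcont.mono (Icc_subset_Icc_right hσ.2)) (fun t ht => hγderiv t ⟨ht.1, ht.2.trans hσ.2⟩)
      (fun t _ => hunit t)
  have hlin := (hu₀.hasFDerivAt_gradient.isLittleO.comp_tendsto
    (hγcont.tendsto_nhdsGT_of_Icc hs₀)).trans_isBigO hspeed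
  simpa [hcrit] using hlin.norm_left.tendsto_div_nhds_zero

theorem tendsto_mul_norm_deriv_deriv_of_normalizedGradientFlow (hs₀ : 0 < s₀)
    (hu : ∀ σ ∈ Icc 0 s₀, ContDiffAt ℝ 2 u (γ σ)) (hγcont : ContinuousOn γ (Icc 0 s₀))
    (hcrit : gradient u (γ 0) = 0) (hγgrad : ∀ σ ∈ Ioc 0 s₀, gradient u (γ σ) ≠ 0)
    (hγderiv : ∀ σ ∈ Ioc 0 s₀,
      HasDerivAt γ (-(‖gradient u (γ σ)‖⁻¹ • gradient u (γ σ))) σ)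
    (harr : ∀ σ ∈ Ioc 0 s₀, ⟪hess u (γ σ) (gradient u (γ σ)), gradient u (γ σ)⟫
      = (1 + lap u (γ σ)) * ‖gradient u (γ σ)‖ ^ 2)
    (hB : ∀ v, hess u (γ 0) (hess u (γ 0) v) = (1 + lap u (γ 0)) • hess u (γ 0) v) :
    Tendsto (fun σ => σ * ‖deriv (deriv γ) σ‖) (𝓝[>] 0) (𝓝 0) := by
  have hu₀ := hu 0 (left_mem_Icc.2 hs₀.le)
  have hγ₀ := hγcont.tendsto_nhdsGT_of_Icc hs₀
  refine Tendsto.congr' ?_ (tendsto_mul_norm_inv_sq_smul_apply_sub_smul hB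
    (hu₀.continuousAt_hess.tendsto.comp hγ₀)
    ((continuousAt_const.add hu₀.continuousAt_lap).tendsto.comp hγ₀)
    (tendsto_norm_gradient_comp_div_of_normalizedGradientFlow hs₀ hu hγcont hcrit hγgrad hγderiv
      harr)
    (neg_ne_zero.2 (hu₀.one_add_lap_ne_zero hB))
    (tendsto_norm_gradient_comp_sub_hess_div_of_normalizedGradientFlow hs₀ hu₀ hγcont hcrit
      hγderiv))
  filter_upwards [Ioo_mem_nhdsGT hs₀] with σ hσ
  rw [deriv_deriv_eq_of_normalizedGradientFlow (fun σ hσ => hu σ (Ioc_subset_Icc_self hσ))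
    hγgrad hγderiv harr hσ]
  rfl

end FlowLine

theorem integral_of_second_derivative_on_dyadic_scales_tendsto_zero_general
    {n : ℕ}
    {Ω U : Set (EuclideanSpace ℝ (Fin (n + 1)))}
    (hUopen : IsOpen U) (hΩU : Ω ⊆ U)
    (u : EuclideanSpace ℝ (Fin (n + 1)) → ℝ) (hu : ContDiffOn ℝ 2 u U)
    (hbdrygrad : ∀ x ∈ frontier Ω, gradient u x ≠ 0)
    (harrival : ∀ x ∈ Ω, gradient u x ≠ 0 →
      ⟪hess u x (gradient u x), gradient u x⟫ = (1 + lap u x) * ‖gradient u x‖ ^ 2)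
    -- the arclength-parametrized flow line γ
    (s₀ : ℝ) (hs₀ : 0 < s₀) (γ : ℝ → EuclideanSpace ℝ (Fin (n + 1)))
    (hγcont : ContinuousOn γ (Icc 0 s₀))
    (hγΩ : ∀ s ∈ Icc (0 : ℝ) s₀, γ s ∈ Ω)
    (hγ0 : γ 0 ∈ {y ∈ Ω | gradient u y = 0})
    (hγgrad : ∀ s ∈ Ioc (0 : ℝ) s₀, gradient u (γ s) ≠ 0)
    (hγderiv : ∀ s ∈ Ioc (0 : ℝ) s₀,
      HasDerivAt γ (-(‖gradient u (γ s)‖⁻¹ • gradient u (γ s))) s)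
    (Λ : ℝ) (hΛ : 1 < Λ) :
    Tendsto (fun s => ∫ σ in s..(Λ * s), ‖deriv (deriv γ) σ‖)
      (nhdsWithin 0 (Ioi 0)) (nhds 0) := by
  obtain ⟨hx₀Ω, hcrit⟩ := hγ0
  have harr : ∀ x ∈ Ω, ⟪hess u x (gradient u x), gradient u x⟫
      = (1 + lap u x) * ‖gradient u x‖ ^ 2 := fun x hx => by
    by_cases h : gradient u x = 0
    · simp [h]
    · exact harrival x hx h
  have hu₂ : ∀ σ ∈ Icc 0 s₀, ContDiffAt ℝ 2 u (γ σ) := fun σ hσ =>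
    hu.contDiffAt (hUopen.mem_nhds (hΩU (hγΩ σ hσ)))
  -- the critical point `γ 0` is not on the boundary, so the arrival time equation holds around it
  have hx₀int : γ 0 ∈ interior Ω := by
    rw [← self_sdiff_frontier]
    exact ⟨hx₀Ω, fun h => hbdrygrad _ h hcrit⟩
  have hB := (hu₂ 0 (left_mem_Icc.2 hs₀.le)).hess_apply_hess_apply_of_gradient_eq_zero hcrit
    (eventually_of_mem (isOpen_interior.mem_nhds hx₀int) fun x hx => harr x (interior_subset hx))
  exact tendsto_intervalIntegral_mul_of_tendsto_smul hΛ.le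
    (tendsto_mul_norm_deriv_deriv_of_normalizedGradientFlow hs₀ hu₂ hγcont hcrit hγgrad hγderiv
      (fun σ hσ => harr _ (hγΩ σ (Ioc_subset_Icc_self hσ))) hB)

/-- for every `Λ > 1`, `∫_s^{Λs} |γ''| → 0` as `s → 0⁺`. -/
theorem integral_of_second_derivative_on_dyadic_scales_tendsto_zero
    {n : ℕ} (hn : 1 ≤ n)
    {Ω U : Set (EuclideanSpace ℝ (Fin (n + 1)))}
    (hΩcomp : IsCompact Ω) (hΩconn : IsConnected Ω)
    (hΩreg : Ω = closure (interior Ω)) (hΩint : (interior Ω).Nonempty)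
    (hUopen : IsOpen U) (hΩU : Ω ⊆ U)
    (u : EuclideanSpace ℝ (Fin (n + 1)) → ℝ) (hu : ContDiffOn ℝ 2 u U)
    (hbdry : ∃ c : ℝ, (∀ x ∈ frontier Ω, u x = c) ∧ Ω = {x ∈ U | c ≤ u x})
    (hbdrygrad : ∀ x ∈ frontier Ω, gradient u x ≠ 0)
    (hsup : sSup (u '' Ω) = 0)
    (harrival : ∀ x ∈ Ω, gradient u x ≠ 0 →
      ⟪hess u x (gradient u x), gradient u x⟫ = (1 + lap u x) * ‖gradient u x‖ ^ 2)
    -- the arclength-parametrized flow line γ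
    (s₀ : ℝ) (hs₀ : 0 < s₀) (γ : ℝ → EuclideanSpace ℝ (Fin (n + 1)))
    (hγcont : ContinuousOn γ (Icc 0 s₀))
    (hγΩ : ∀ s ∈ Icc (0 : ℝ) s₀, γ s ∈ Ω)
    (hγ0 : γ 0 ∈ {y ∈ Ω | gradient u y = 0})
    (hγC1 : ContDiffOn ℝ 1 γ (Ioc 0 s₀))
    (hγgrad : ∀ s ∈ Ioc (0 : ℝ) s₀, gradient u (γ s) ≠ 0)
    (hγderiv : ∀ s ∈ Ioc (0 : ℝ) s₀,
      HasDerivAt γ (-(‖gradient u (γ s)‖⁻¹ • gradient u (γ s))) s)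
    (Λ : ℝ) (hΛ : 1 < Λ) :
    Tendsto (fun s => ∫ σ in s..(Λ * s), ‖deriv (deriv γ) σ‖)
      (nhdsWithin 0 (Ioi 0)) (nhds 0) :=
  integral_of_second_derivative_on_dyadic_scales_tendsto_zero_general hUopen hΩU u hu hbdrygrad
    harrival s₀ hs₀ γ hγcont hγΩ hγ0 hγgrad hγderiv Λ hΛ
end

section
/- Let v : ℝⁿ → ℝ be smooth with ℒv = −λv on ℝⁿ for some λ ∈ ℝ, and suppose ∫_{ℝⁿ} v² e^{−|x|²/4} dx < ∞. Then ∫_{ℝⁿ} |∇v|² e^{−|x|²/4} dx ≤ 2λ ∫_{ℝⁿ} v² e^{−|x|²/4} dx (in particular the left-hand side is finite). Consequently, if v is not identically zero then λ ≥ 0, and if λ = 0 then v is constant. -/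
open Filter Set MeasureTheory
open scoped RealInnerProductSpace
open scoped ContDiff

/-- The drift Laplacian `ℒ v = Δv − ⟨x, ∇v⟩/2` on `ℝᵐ`. -/
noncomputable def driftL {m : ℕ} (v : EuclideanSpace ℝ (Fin m) → ℝ)
    (x : EuclideanSpace ℝ (Fin m)) : ℝ :=
  lap v x - ⟪x, gradient v x⟫ / 2

namespace DriftPf
variable {n : ℕ}
abbrev Eu (n : ℕ) := EuclideanSpace ℝ (Fin n)

lemma one_le_inf : (1 : WithTop ℕ∞) ≤ ∞ := by exact_mod_cast le_top

lemma inner_gradient_eq (u : Eu n → ℝ) (x w : Eu n) :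
    ⟪gradient u x, w⟫ = fderiv ℝ u x w := InnerProductSpace.toDual_symm_apply

lemma contDiff_gradient {u : Eu n → ℝ} (hu : ContDiff ℝ ∞ u) : ContDiff ℝ ∞ (gradient u) := by
  have h : gradient u = fun x => (InnerProductSpace.toDual ℝ (Eu n)).symm (fderiv ℝ u x) := rfl
  rw [h]
  exact ((InnerProductSpace.toDual ℝ (Eu n)).symm.contDiff).comp (hu.fderiv_right (m := ∞) (le_of_eq rfl))

lemma grad_coord {u : Eu n → ℝ} (x : Eu n) (i : Fin n) :
    gradient u x i = fderiv ℝ u x (EuclideanSpace.single i 1) := by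
  rw [← inner_gradient_eq, EuclideanSpace.inner_single_right]
  simp

lemma trace_formula (A : Eu n →L[ℝ] Eu n) :
    LinearMap.trace ℝ _ (A : Eu n →ₗ[ℝ] Eu n) =
      ∑ i, A (EuclideanSpace.single i 1) i := by
  rw [LinearMap.trace_eq_matrix_trace ℝ ((EuclideanSpace.basisFun (Fin n) ℝ).toBasis)]
  rw [Matrix.trace]
  refine Finset.sum_congr rfl fun i _ => ?_
  rw [Matrix.diag_apply, LinearMap.toMatrix_apply]
  simp [EuclideanSpace.basisFun_repr, EuclideanSpace.basisFun_apply]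


lemma cont_of_top {u : Eu n → ℝ} (hu : ContDiff ℝ ∞ u) (w : Eu n) :
    Continuous fun x => fderiv ℝ u x w :=
  ((hu.fderiv_right (m := 0) one_le_inf).continuous).clm_apply continuous_const

lemma integral_fderiv_eq_zero {g : Eu n → ℝ} (hg : ContDiff ℝ ∞ g)
    (hcs : HasCompactSupport g) (w : Eu n) :
    ∫ x, fderiv ℝ g x w = 0 := by
  have h1 : Integrable (fun x : Eu n => (1:ℝ) * g x) := by
    simpa using hg.continuous.integrable_of_hasCompactSupport hcs
  have h2 : Integrable (fun x : Eu n => (1:ℝ) * fderiv ℝ g x w) := by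
    simpa using (cont_of_top hg w).integrable_of_hasCompactSupport (hcs.fderiv_apply ℝ w)
  have h3 : Integrable (fun x : Eu n => fderiv ℝ (fun _ : Eu n => (1:ℝ)) x w * g x) := by
    simp [fderiv_fun_const]
  have := integral_mul_fderiv_eq_neg_fderiv_mul_of_integrable h3 h2 h1
    (fun x _ => differentiableAt_const (1:ℝ)) (fun x _ => hg.differentiable (by simp) x)
  simpa [fderiv_fun_const] using this


lemma divergence_identity {u ψ : Eu n → ℝ} (hu : ContDiff ℝ ∞ u) (hψ : ContDiff ℝ ∞ ψ)
    (hcs : HasCompactSupport ψ) :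
    ∫ x, (fderiv ℝ ψ x (gradient u x) + ψ x * lap u x) = 0 := by
  classical
  set b : Fin n → Eu n := fun i => EuclideanSpace.single i 1 with hb
  have hgrad : ContDiff ℝ ∞ (gradient u) := contDiff_gradient hu
  have hhi : ∀ i, ContDiff ℝ ∞ (fun x => fderiv ℝ u x (b i)) :=
    fun i => (hu.fderiv_right (m := ∞) (le_of_eq rfl)).clm_apply contDiff_const
  have key : ∀ i, ∫ x, fderiv ℝ (fun y => ψ y * fderiv ℝ u y (b i)) x (b i) = 0 := fun i =>
    integral_fderiv_eq_zero (hψ.mul (hhi i)) (hcs.mul_right) (b i)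
  have pt : ∀ x, (∑ i, fderiv ℝ (fun y => ψ y * fderiv ℝ u y (b i)) x (b i))
      = fderiv ℝ ψ x (gradient u x) + ψ x * lap u x := by
    intro x
    have hdψ : DifferentiableAt ℝ ψ x := (hψ.differentiable (by simp)) x
    have e1 : ∀ i, fderiv ℝ (fun y => ψ y * fderiv ℝ u y (b i)) x (b i)
        = ψ x * fderiv ℝ (fun y => fderiv ℝ u y (b i)) x (b i)
          + fderiv ℝ u x (b i) * fderiv ℝ ψ x (b i) := by
      intro i
      rw [fderiv_fun_mul hdψ (((hhi i).differentiable (by simp)) x)]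
      simp [smul_eq_mul]
    rw [Finset.sum_congr rfl fun i _ => e1 i, Finset.sum_add_distrib, ← Finset.mul_sum]
    have e2 : (∑ i, fderiv ℝ u x (b i) * fderiv ℝ ψ x (b i)) = fderiv ℝ ψ x (gradient u x) := by
      rw [← inner_gradient_eq ψ x (gradient u x), PiLp.inner_apply]
      refine Finset.sum_congr rfl fun i _ => ?_
      simp [grad_coord, hb, mul_comm]
    have e3 : (∑ i, fderiv ℝ (fun y => fderiv ℝ u y (b i)) x (b i)) = lap u x := by
      rw [lap, hess, trace_formula]
      refine Finset.sum_congr rfl fun i _ => ?_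
      have hproj : (fun y : Eu n => fderiv ℝ u y (b i)) = fun y => gradient u y i := by
        funext y; rw [grad_coord]
      rw [hproj]
      have hd : DifferentiableAt ℝ (gradient u) x := (hgrad.differentiable (by simp)) x
      have hc : (fun y : Eu n => gradient u y i)
          = (EuclideanSpace.proj (𝕜 := ℝ) i) ∘ (gradient u) := rfl
      rw [hc, fderiv_comp x (EuclideanSpace.proj (𝕜 := ℝ) i).differentiableAt hd,
        ContinuousLinearMap.fderiv]
      rfl
    rw [e2, e3, add_comm]
  have hint : ∀ i, Integrable (fun x => fderiv ℝ (fun y => ψ y * fderiv ℝ u y (b i)) x (b i)) := by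
    intro i
    exact (cont_of_top (hψ.mul (hhi i)) (b i)).integrable_of_hasCompactSupport
      ((hcs.mul_right).fderiv_apply ℝ (b i))
  calc ∫ x, (fderiv ℝ ψ x (gradient u x) + ψ x * lap u x)
      = ∫ x, ∑ i, fderiv ℝ (fun y => ψ y * fderiv ℝ u y (b i)) x (b i) := by
        refine integral_congr_ae (Filter.Eventually.of_forall fun x => ?_)
        simpa using (pt x).symm
    _ = ∑ i, ∫ x, fderiv ℝ (fun y => ψ y * fderiv ℝ u y (b i)) x (b i) :=
        integral_finset_sum _ fun i _ => hint i
    _ = 0 := by simp [key]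


/-- The Gaussian weight. -/
noncomputable def rho (x : Eu n) : ℝ := Real.exp (-‖x‖ ^ 2 / 4)

lemma rho_pos (x : Eu n) : 0 < rho x := Real.exp_pos _

lemma contDiff_rho : ContDiff ℝ ∞ (rho (n := n)) :=
  Real.contDiff_exp.comp ((contDiff_norm_sq ℝ).neg.div_const 4)

lemma fderiv_rho_apply (x w : Eu n) :
    fderiv ℝ rho x w = -(⟪x, w⟫ / 2) * rho x := by
  have h1 : HasFDerivAt (fun y : Eu n => ‖y‖ ^ 2) (2 • (innerSL ℝ x)) x :=
    (hasStrictFDerivAt_norm_sq x).hasFDerivAt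
  have h3 := (h1.const_mul (-(4⁻¹ : ℝ))).exp
  have hfun : (rho (n := n)) = fun y => Real.exp ((-(4⁻¹ : ℝ)) * ‖y‖ ^ 2) := by
    funext y; rw [rho]; ring_nf
  rw [hfun, h3.fderiv]
  simp only [rho, ContinuousLinearMap.smul_apply, two_smul, ContinuousLinearMap.add_apply,
    innerSL_apply_apply, smul_eq_mul, hfun]
  ring

lemma st_deriv_bound : ∃ D : ℝ, 0 ≤ D ∧ ∀ t : ℝ, |deriv Real.smoothTransition t| ≤ D := by
  have hcont : Continuous (deriv Real.smoothTransition) :=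
    (Real.smoothTransition.contDiff (n := 1)).continuous_deriv le_rfl
  obtain ⟨m, _, hmax⟩ := isCompact_Icc.exists_isMaxOn (Set.nonempty_Icc.2 zero_le_one)
    (continuous_abs.comp hcont).continuousOn
  refine ⟨|deriv Real.smoothTransition m|, abs_nonneg _, fun t => ?_⟩
  by_cases ht : t ∈ Set.Icc (0:ℝ) 1
  · exact hmax ht
  · have h0 : deriv Real.smoothTransition t = 0 := by
      rw [Set.mem_Icc, not_and_or] at ht
      rcases ht with h | h
      · push_neg at h
        have hev : Real.smoothTransition =ᶠ[nhds t] (fun _ => (0:ℝ)) := by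
          filter_upwards [Iio_mem_nhds h] with y hy
          exact Real.smoothTransition.zero_of_nonpos (le_of_lt hy)
        rw [hev.deriv_eq, deriv_const]
      · push_neg at h
        have hev : Real.smoothTransition =ᶠ[nhds t] (fun _ => (1:ℝ)) := by
          filter_upwards [Ioi_mem_nhds h] with y hy
          exact Real.smoothTransition.one_of_one_le (le_of_lt hy)
        rw [hev.deriv_eq, deriv_const]
    rw [h0]
    simp

/-- The cutoff function. -/
noncomputable def cut (R : ℝ) (x : Eu n) : ℝ := Real.smoothTransition (2 - ‖x‖ ^ 2 / R ^ 2)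

lemma contDiff_cut (R : ℝ) : ContDiff ℝ ∞ (cut (n := n) R) :=
  Real.smoothTransition.contDiff.comp (contDiff_const.sub ((contDiff_norm_sq ℝ).div_const _))

lemma cut_nonneg (R : ℝ) (x : Eu n) : 0 ≤ cut R x := Real.smoothTransition.nonneg _

lemma cut_le_one (R : ℝ) (x : Eu n) : cut R x ≤ 1 := Real.smoothTransition.le_one _

lemma cut_eq_one {R : ℝ} (hR : 0 < R) {x : Eu n} (hx : ‖x‖ ≤ R) : cut R x = 1 := by
  apply Real.smoothTransition.one_of_one_le
  have h1 : ‖x‖ ^ 2 / R ^ 2 ≤ 1 := by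
    rw [div_le_one (pow_pos hR 2)]
    exact pow_le_pow_left₀ (norm_nonneg _) hx 2
  linarith

lemma cut_eq_zero {R : ℝ} (hR : 0 < R) {x : Eu n} (hx : 2 * R < ‖x‖) : cut R x = 0 := by
  apply Real.smoothTransition.zero_of_nonpos
  have h1 : (2:ℝ) ≤ ‖x‖ ^ 2 / R ^ 2 := by
    rw [le_div_iff₀ (pow_pos hR 2)]
    nlinarith [norm_nonneg x]
  linarith

lemma cut_hasCompactSupport {R : ℝ} (hR : 0 < R) : HasCompactSupport (cut (n := n) R) := by
  apply HasCompactSupport.intro (isCompact_closedBall (0 : Eu n) (2*R))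
  intro x hx
  rw [Metric.mem_closedBall, dist_zero_right, not_le] at hx
  exact cut_eq_zero hR hx

lemma hasFDerivAt_cut (R : ℝ) (x : Eu n) :
    HasFDerivAt (cut R) ((deriv Real.smoothTransition (2 - ‖x‖ ^ 2 / R ^ 2)) •
      (-((R ^ 2)⁻¹ • ((2:ℕ) • innerSL ℝ x)))) x := by
  have h1 : HasFDerivAt (fun y : Eu n => ‖y‖ ^ 2) (2 • (innerSL ℝ x)) x :=
    (hasStrictFDerivAt_norm_sq x).hasFDerivAt
  have h2 : HasFDerivAt (fun y : Eu n => 2 - ‖y‖ ^ 2 / R ^ 2)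
      (-((R ^ 2)⁻¹ • ((2:ℕ) • innerSL ℝ x))) x := by
    have h := (h1.mul_const ((R ^ 2)⁻¹ : ℝ)).const_sub 2
    have e1 : (fun y : Eu n => 2 - ‖y‖ ^ 2 / R ^ 2) = fun y : Eu n => 2 - ‖y‖ ^ 2 * (R ^ 2)⁻¹ := by
      funext y; rw [div_eq_mul_inv]
    rw [e1]
    convert h using 1
  have h3 : HasDerivAt Real.smoothTransition
      (deriv Real.smoothTransition (2 - ‖x‖ ^ 2 / R ^ 2)) (2 - ‖x‖ ^ 2 / R ^ 2) :=
    (((Real.smoothTransition.contDiff (n := 1)).differentiable (by simp)) _).hasDerivAt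
  exact h3.comp_hasFDerivAt x h2

lemma cut_fderiv_apply_bound :
    ∃ C : ℝ, 0 ≤ C ∧ ∀ R : ℝ, 1 ≤ R → ∀ x w : Eu n,
      |fderiv ℝ (cut R) x w| ≤ C / R * ‖w‖ := by
  obtain ⟨D, hD0, hD⟩ := st_deriv_bound
  refine ⟨4 * D, by linarith, fun R hR x w => ?_⟩
  have hRpos : (0:ℝ) < R := lt_of_lt_of_le one_pos hR
  by_cases hx : ‖x‖ ≤ 2 * R
  · rw [(hasFDerivAt_cut R x).fderiv]
    have hinner : |(⟪x, w⟫ : ℝ)| ≤ ‖x‖ * ‖w‖ := abs_real_inner_le_norm x w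
    simp only [ContinuousLinearMap.smul_apply, ContinuousLinearMap.neg_apply, two_smul,
      ContinuousLinearMap.add_apply, innerSL_apply_apply, smul_eq_mul]
    rw [abs_mul]
    have hb1 : |(-((R ^ 2)⁻¹ * ((⟪x, w⟫ : ℝ) + ⟪x, w⟫)))| ≤ 4 / R * ‖w‖ := by
      rw [abs_neg, abs_mul]
      have h4 : |(⟪x, w⟫ : ℝ) + ⟪x, w⟫| ≤ 2 * (‖x‖ * ‖w‖) := by
        calc |(⟪x, w⟫ : ℝ) + ⟪x, w⟫| ≤ |(⟪x, w⟫ : ℝ)| + |(⟪x, w⟫ : ℝ)| := abs_add_le _ _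
        _ ≤ 2 * (‖x‖ * ‖w‖) := by linarith
      have h5 : |((R ^ 2)⁻¹ : ℝ)| = (R ^ 2)⁻¹ := abs_of_pos (by positivity)
      rw [h5]
      calc (R ^ 2)⁻¹ * |(⟪x, w⟫ : ℝ) + ⟪x, w⟫| ≤ (R ^ 2)⁻¹ * (2 * (‖x‖ * ‖w‖)) := by
            apply mul_le_mul_of_nonneg_left h4 (by positivity)
        _ ≤ (R ^ 2)⁻¹ * (2 * ((2 * R) * ‖w‖)) := by
            have := norm_nonneg w
            apply mul_le_mul_of_nonneg_left _ (by positivity)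
            nlinarith [norm_nonneg x]
        _ = 4 / R * ‖w‖ := by field_simp; ring
    calc |deriv Real.smoothTransition (2 - ‖x‖ ^ 2 / R ^ 2)| *
          |(-((R ^ 2)⁻¹ * ((⟪x, w⟫ : ℝ) + ⟪x, w⟫)))|
        ≤ D * (4 / R * ‖w‖) := by
          apply mul_le_mul (hD _) hb1 (abs_nonneg _) hD0
      _ = 4 * D / R * ‖w‖ := by ring
  · push_neg at hx
    have hev : cut R =ᶠ[nhds x] (fun _ => (0:ℝ)) := by
      have hopen : IsOpen {y : Eu n | 2 * R < ‖y‖} :=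
        isOpen_lt continuous_const continuous_norm
      filter_upwards [hopen.mem_nhds hx] with y hy
      exact cut_eq_zero hRpos hy
    rw [hev.fderiv_eq, fderiv_fun_const]
    simp only [Pi.zero_apply, ContinuousLinearMap.zero_apply, abs_zero]
    positivity

lemma cut_fderiv_zero {R : ℝ} {x : Eu n} (hx : ‖x‖ < R) : fderiv ℝ (cut R) x = 0 := by
  have hev : cut R =ᶠ[nhds x] (fun _ => (1:ℝ)) := by
    have hopen : IsOpen {y : Eu n | ‖y‖ < R} := isOpen_lt continuous_norm continuous_const
    filter_upwards [hopen.mem_nhds hx] with y hy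
    exact cut_eq_one (lt_of_le_of_lt (norm_nonneg x) hx) (le_of_lt hy)
  rw [hev.fderiv_eq, fderiv_fun_const]
  rfl

section Main
variable {n : ℕ} {v : Eu n → ℝ} {lam : ℝ}

lemma integrable_of_vanish {R : ℝ} {F : Eu n → ℝ} (hF : Continuous F)
    (h0 : ∀ x : Eu n, 2 * R < ‖x‖ → F x = 0) : Integrable F :=
  hF.integrable_of_hasCompactSupport (HasCompactSupport.intro
    (isCompact_closedBall (0 : Eu n) (2 * R)) (fun x hx => h0 x (by
      rwa [Metric.mem_closedBall, dist_zero_right, not_le] at hx)))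

lemma cont_gradnormsq (hv : ContDiff ℝ ∞ v) :
    Continuous fun x : Eu n => ‖gradient v x‖ ^ 2 :=
  ((contDiff_gradient hv).continuous).norm.pow 2

lemma cont_T (hv : ContDiff ℝ ∞ v) (R : ℝ) :
    Continuous fun x : Eu n => fderiv ℝ (cut R) x (gradient v x) :=
  (((contDiff_cut R).fderiv_right (m := 0) one_le_inf).continuous).clm_apply
    (contDiff_gradient hv).continuous

lemma arith1 {a b t r g c C : ℝ} (ha0 : 0 ≤ a) (hg : 0 ≤ g) (hr : 0 ≤ r)
    (ht : |t| ≤ c * g) (hc0 : 0 ≤ c) (hcC : c ≤ C) :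
    -2 * (a * b * t * r) ≤ 1/2 * (a ^ 2 * g ^ 2 * r) + 2 * C ^ 2 * (b ^ 2 * r) := by
  have hb := abs_nonneg b
  have htt := abs_nonneg t
  have h1 : -(a * b * t) ≤ a * |b| * |t| := by
    calc -(a * b * t) ≤ |a * b * t| := neg_le_abs _
    _ = a * |b| * |t| := by rw [abs_mul, abs_mul, abs_of_nonneg ha0]
  have h2 : a * |b| * |t| ≤ a * |b| * (c * g) := by
    apply mul_le_mul_of_nonneg_left ht (by positivity)
  have h3 : 2 * (a * |b| * (c * g)) ≤ 1/2 * (a ^ 2 * g ^ 2) + 2 * (c ^ 2 * b ^ 2) := by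
    nlinarith [sq_nonneg (a * g - 2 * (c * |b|)), sq_abs b]
  have h4 : c ^ 2 ≤ C ^ 2 := by nlinarith
  have h5 : -2 * (a * b * t) ≤ 1/2 * (a ^ 2 * g ^ 2) + 2 * C ^ 2 * b ^ 2 := by
    nlinarith [sq_nonneg b]
  nlinarith [mul_le_mul_of_nonneg_right h5 hr]

lemma int1 (hv : ContDiff ℝ ∞ v) {R : ℝ} (hR0 : 0 < R) :
    Integrable (fun x : Eu n => cut R x ^ 2 * ‖gradient v x‖ ^ 2 * rho x) :=
  integrable_of_vanish (R := R) ((((contDiff_cut R).continuous.pow 2).mul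
      (cont_gradnormsq hv)).mul contDiff_rho.continuous)
    (fun x hx => by simp [cut_eq_zero hR0 hx])

lemma int2 (hv : ContDiff ℝ ∞ v) {R : ℝ} (hR0 : 0 < R) :
    Integrable (fun x : Eu n =>
      cut R x * v x * (fderiv ℝ (cut R) x (gradient v x)) * rho x) :=
  integrable_of_vanish (R := R) (((((contDiff_cut R).continuous.mul hv.continuous).mul
      (cont_T hv R)).mul contDiff_rho.continuous))
    (fun x hx => by simp [cut_eq_zero hR0 hx])

lemma int3 (hv : ContDiff ℝ ∞ v) {R : ℝ} (hR0 : 0 < R) :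
    Integrable (fun x : Eu n => cut R x ^ 2 * (v x) ^ 2 * rho x) :=
  integrable_of_vanish (R := R) ((((contDiff_cut R).continuous.pow 2).mul
      (hv.continuous.pow 2)).mul contDiff_rho.continuous)
    (fun x hx => by simp [cut_eq_zero hR0 hx])

lemma cutoff_identity (hv : ContDiff ℝ ∞ v) (heig : ∀ x, driftL v x = -lam * v x)
    {R : ℝ} (hR : 1 ≤ R) :
    ∫ x, (cut R x) ^ 2 * ‖gradient v x‖ ^ 2 * rho x
      = lam * (∫ x, (cut R x) ^ 2 * (v x) ^ 2 * rho x)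
        - 2 * ∫ x, cut R x * v x * (fderiv ℝ (cut R) x (gradient v x)) * rho x := by
  have hR0 : (0:ℝ) < R := lt_of_lt_of_le one_pos hR
  have hφ : ContDiff ℝ ∞ (cut (n := n) R) := contDiff_cut R
  have hψc : ContDiff ℝ ∞ (fun x : Eu n => cut R x ^ 2 * v x * rho x) :=
    ((hφ.pow 2).mul hv).mul contDiff_rho
  have hψcs : HasCompactSupport (fun x : Eu n => cut R x ^ 2 * v x * rho x) := by
    apply HasCompactSupport.intro (isCompact_closedBall (0 : Eu n) (2 * R))
    intro x hx
    rw [Metric.mem_closedBall, dist_zero_right, not_le] at hx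
    simp [cut_eq_zero hR0 hx]
  have hdiv := divergence_identity hv hψc hψcs
  have pt : ∀ x : Eu n, fderiv ℝ (fun y => cut R y ^ 2 * v y * rho y) x (gradient v x)
      + (cut R x ^ 2 * v x * rho x) * lap v x
      = cut R x ^ 2 * ‖gradient v x‖ ^ 2 * rho x
        + 2 * (cut R x * v x * (fderiv ℝ (cut R) x (gradient v x)) * rho x)
        - lam * (cut R x ^ 2 * (v x) ^ 2 * rho x) := by
    intro x
    have hdv : DifferentiableAt ℝ v x := (hv.differentiable (by simp)) x
    have hdφ : DifferentiableAt ℝ (cut (n := n) R) x := (hφ.differentiable (by simp)) x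
    have hdρ : DifferentiableAt ℝ (rho (n := n)) x :=
      (contDiff_rho.differentiable (by simp)) x
    have hdA : DifferentiableAt ℝ (fun y : Eu n => cut R y ^ 2 * v y) x :=
      (hdφ.pow 2).mul hdv
    have e0 : fderiv ℝ (fun y : Eu n => cut R y ^ 2) x
        = cut R x • fderiv ℝ (cut R) x + cut R x • fderiv ℝ (cut R) x := by
      have : (fun y : Eu n => cut R y ^ 2) = fun y => cut R y * cut R y := by
        funext y; ring
      rw [this, fderiv_fun_mul hdφ hdφ]
    have e2 : fderiv ℝ (fun y : Eu n => cut R y ^ 2 * v y) x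
        = (cut R x ^ 2) • fderiv ℝ v x + v x • fderiv ℝ (fun y : Eu n => cut R y ^ 2) x :=
      fderiv_mul (hdφ.pow 2) hdv
    have e1 : fderiv ℝ (fun y : Eu n => cut R y ^ 2 * v y * rho y) x
        = (cut R x ^ 2 * v x) • fderiv ℝ rho x
          + rho x • fderiv ℝ (fun y : Eu n => cut R y ^ 2 * v y) x :=
      fderiv_mul hdA hdρ
    have elap : lap v x = -lam * v x + ⟪x, gradient v x⟫ / 2 := by
      have h := heig x
      rw [driftL] at h
      linarith
    have edv : fderiv ℝ v x (gradient v x) = ‖gradient v x‖ ^ 2 := by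
      rw [← inner_gradient_eq, real_inner_self_eq_norm_sq]
    have edρ : fderiv ℝ rho x (gradient v x) = -(⟪x, gradient v x⟫ / 2) * rho x :=
      fderiv_rho_apply x (gradient v x)
    rw [e1]
    simp only [ContinuousLinearMap.add_apply, ContinuousLinearMap.smul_apply, smul_eq_mul]
    rw [e2]
    simp only [ContinuousLinearMap.add_apply, ContinuousLinearMap.smul_apply, smul_eq_mul]
    rw [e0]
    simp only [ContinuousLinearMap.add_apply, ContinuousLinearMap.smul_apply, smul_eq_mul]
    rw [elap, edv, edρ]
    ring
  have hcφ : Continuous (cut (n := n) R) := hφ.continuous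
  have hcv : Continuous v := hv.continuous
  have hcρ : Continuous (rho (n := n)) := contDiff_rho.continuous
  have hInt1 : Integrable (fun x : Eu n => cut R x ^ 2 * ‖gradient v x‖ ^ 2 * rho x) :=
    integrable_of_vanish (R := R) (((hcφ.pow 2).mul (cont_gradnormsq hv)).mul hcρ)
      (fun x hx => by simp [cut_eq_zero hR0 hx])
  have hInt2 : Integrable (fun x : Eu n =>
      cut R x * v x * (fderiv ℝ (cut R) x (gradient v x)) * rho x) :=
    integrable_of_vanish (R := R) ((((hcφ.mul hcv).mul (cont_T hv R)).mul hcρ))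
      (fun x hx => by simp [cut_eq_zero hR0 hx])
  have hInt3 : Integrable (fun x : Eu n => cut R x ^ 2 * (v x) ^ 2 * rho x) :=
    integrable_of_vanish (R := R) (((hcφ.pow 2).mul (hcv.pow 2)).mul hcρ)
      (fun x hx => by simp [cut_eq_zero hR0 hx])
  have hsplit : ∫ x, (cut R x ^ 2 * ‖gradient v x‖ ^ 2 * rho x
        + 2 * (cut R x * v x * (fderiv ℝ (cut R) x (gradient v x)) * rho x)
        - lam * (cut R x ^ 2 * (v x) ^ 2 * rho x))
      = (∫ x, cut R x ^ 2 * ‖gradient v x‖ ^ 2 * rho x)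
        + 2 * (∫ x, cut R x * v x * (fderiv ℝ (cut R) x (gradient v x)) * rho x)
        - lam * (∫ x, cut R x ^ 2 * (v x) ^ 2 * rho x) := by
    have h2 : Integrable (fun x : Eu n =>
        2 * (cut R x * v x * (fderiv ℝ (cut R) x (gradient v x)) * rho x)) :=
      hInt2.const_mul 2
    have h3 : Integrable (fun x : Eu n => lam * (cut R x ^ 2 * (v x) ^ 2 * rho x)) :=
      hInt3.const_mul lam
    have h12 : Integrable (fun x : Eu n => cut R x ^ 2 * ‖gradient v x‖ ^ 2 * rho x
        + 2 * (cut R x * v x * (fderiv ℝ (cut R) x (gradient v x)) * rho x)) :=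
      hInt1.add h2
    rw [integral_sub h12 h3, integral_add hInt1 h2, MeasureTheory.integral_const_mul, MeasureTheory.integral_const_mul]
  have hz : ∫ x, (cut R x ^ 2 * ‖gradient v x‖ ^ 2 * rho x
        + 2 * (cut R x * v x * (fderiv ℝ (cut R) x (gradient v x)) * rho x)
        - lam * (cut R x ^ 2 * (v x) ^ 2 * rho x)) = 0 := by
    rw [← hdiv]
    exact integral_congr_ae (Filter.Eventually.of_forall fun x => (pt x).symm)
  rw [hsplit] at hz
  linarith

lemma uniform_bound (hv : ContDiff ℝ ∞ v) (heig : ∀ x, driftL v x = -lam * v x)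
    (hint : Integrable (fun x : Eu n => v x ^ 2 * rho x))
    {C : ℝ} (hC0 : 0 ≤ C)
    (hC : ∀ R : ℝ, 1 ≤ R → ∀ x w : Eu n, |fderiv ℝ (cut R) x w| ≤ C / R * ‖w‖)
    {R : ℝ} (hR : 1 ≤ R) :
    ∫ x, (cut R x) ^ 2 * ‖gradient v x‖ ^ 2 * rho x
      ≤ 2 * |lam| * (∫ x : Eu n, v x ^ 2 * rho x)
        + 4 * C ^ 2 * (∫ x : Eu n, v x ^ 2 * rho x) := by
  have hR0 : (0:ℝ) < R := lt_of_lt_of_le one_pos hR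
  have hid := cutoff_identity hv heig hR
  have hInt1 := int1 hv hR0 (v := v)
  have hInt2 := int2 hv hR0 (v := v)
  have hInt3 := int3 hv hR0 (v := v)
  have hK0 : 0 ≤ ∫ x : Eu n, v x ^ 2 * rho x :=
    integral_nonneg fun x => mul_nonneg (sq_nonneg _) (rho_pos x).le
  have hI2nn : 0 ≤ ∫ x : Eu n, cut R x ^ 2 * (v x) ^ 2 * rho x :=
    integral_nonneg fun x =>
      mul_nonneg (mul_nonneg (sq_nonneg _) (sq_nonneg _)) (rho_pos x).le
  have hI2K : (∫ x : Eu n, cut R x ^ 2 * (v x) ^ 2 * rho x)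
      ≤ ∫ x : Eu n, v x ^ 2 * rho x := by
    apply integral_mono hInt3 hint
    intro x
    have h1 : cut R x ^ 2 ≤ 1 := pow_le_one₀ (cut_nonneg R x) (cut_le_one R x)
    calc cut R x ^ 2 * v x ^ 2 * rho x ≤ 1 * v x ^ 2 * rho x :=
          mul_le_mul_of_nonneg_right
            (mul_le_mul_of_nonneg_right h1 (sq_nonneg _)) (rho_pos x).le
      _ = v x ^ 2 * rho x := by ring
  have hI1nn : 0 ≤ ∫ x : Eu n, cut R x ^ 2 * ‖gradient v x‖ ^ 2 * rho x :=
    integral_nonneg fun x =>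
      mul_nonneg (mul_nonneg (sq_nonneg _) (sq_nonneg _)) (rho_pos x).le
  have hI3b : -(2 * ∫ x : Eu n,
        cut R x * v x * (fderiv ℝ (cut R) x (gradient v x)) * rho x)
      ≤ 1/2 * (∫ x : Eu n, cut R x ^ 2 * ‖gradient v x‖ ^ 2 * rho x)
        + 2 * C ^ 2 * (∫ x : Eu n, v x ^ 2 * rho x) := by
    have hIntL : Integrable (fun x : Eu n =>
        -2 * (cut R x * v x * (fderiv ℝ (cut R) x (gradient v x)) * rho x)) :=
      hInt2.const_mul (-2)
    have hIntR : Integrable (fun x : Eu n =>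
        1/2 * (cut R x ^ 2 * ‖gradient v x‖ ^ 2 * rho x)
          + 2 * C ^ 2 * ((v x) ^ 2 * rho x)) :=
      (hInt1.const_mul (1/2)).add (hint.const_mul (2 * C ^ 2))
    have hmono := integral_mono hIntL hIntR (fun x => by
      have hT := hC R hR x (gradient v x)
      exact arith1 (cut_nonneg R x) (norm_nonneg _) (rho_pos x).le hT
        (div_nonneg hC0 hR0.le) (div_le_self hC0 hR))
    rw [integral_add (hInt1.const_mul (1/2)) (hint.const_mul (2 * C ^ 2)),
      integral_const_mul, integral_const_mul, integral_const_mul] at hmono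
    linarith
  have hla1 : lam * (∫ x : Eu n, cut R x ^ 2 * (v x) ^ 2 * rho x)
      ≤ |lam| * (∫ x : Eu n, cut R x ^ 2 * (v x) ^ 2 * rho x) :=
    mul_le_mul_of_nonneg_right (le_abs_self lam) hI2nn
  have hla2 : |lam| * (∫ x : Eu n, cut R x ^ 2 * (v x) ^ 2 * rho x)
      ≤ |lam| * (∫ x : Eu n, v x ^ 2 * rho x) :=
    mul_le_mul_of_nonneg_left hI2K (abs_nonneg lam)
  linarith


lemma integrable_of_ball_bound {W : Eu n → ℝ} (hWc : Continuous W) (hW0 : ∀ x, 0 ≤ W x)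
    {M : ℝ} (hM : ∀ k : ℕ, ∫ x in Metric.ball (0 : Eu n) k, W x ≤ M) :
    Integrable W := by
  refine ⟨hWc.aestronglyMeasurable, ?_⟩
  rw [hasFiniteIntegral_iff_norm]
  set F : ℕ → Eu n → ENNReal := fun k x =>
    (Metric.ball (0 : Eu n) k).indicator (fun y => ENNReal.ofReal (W y)) x with hF
  have hmeas : ∀ k, Measurable (F k) := fun k =>
    (ENNReal.measurable_ofReal.comp hWc.measurable).indicator Metric.isOpen_ball.measurableSet
  have hmono : Monotone F := by
    intro k k' hk x
    show (Metric.ball (0 : Eu n) k).indicator (fun y => ENNReal.ofReal (W y)) x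
      ≤ (Metric.ball (0 : Eu n) k').indicator (fun y => ENNReal.ofReal (W y)) x
    by_cases hx : x ∈ Metric.ball (0 : Eu n) (k:ℝ)
    · rw [Set.indicator_of_mem hx, Set.indicator_of_mem
        (Metric.ball_subset_ball (by exact_mod_cast Nat.cast_le.mpr hk) hx)]
    · rw [Set.indicator_of_notMem hx]
      exact zero_le
  have hsup : ∀ x, (⨆ k, F k x) = ENNReal.ofReal (W x) := by
    intro x
    apply le_antisymm
    · exact iSup_le fun k => Set.indicator_le_self _ _ x
    · obtain ⟨k, hk⟩ := exists_nat_gt ‖x‖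
      refine le_iSup_of_le k ?_
      show ENNReal.ofReal (W x)
        ≤ (Metric.ball (0 : Eu n) k).indicator (fun y => ENNReal.ofReal (W y)) x
      rw [Set.indicator_of_mem (by rwa [Metric.mem_ball, dist_zero_right])]
  have hlin : ∀ k, (∫⁻ x, F k x) ≤ ENNReal.ofReal M := by
    intro k
    have hio : IntegrableOn W (Metric.ball (0 : Eu n) k) :=
      (hWc.continuousOn.integrableOn_compact (isCompact_closedBall _ _)).mono_set
        Metric.ball_subset_closedBall
    show (∫⁻ x, (Metric.ball (0 : Eu n) k).indicator (fun y => ENNReal.ofReal (W y)) x)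
      ≤ ENNReal.ofReal M
    rw [lintegral_indicator Metric.isOpen_ball.measurableSet]
    rw [← ofReal_integral_eq_lintegral_ofReal hio
      (Filter.Eventually.of_forall fun x => hW0 x)]
    exact ENNReal.ofReal_le_ofReal (hM k)
  refine lt_of_le_of_lt (le_trans (le_of_eq ?_) (le_trans (le_of_eq
    (lintegral_iSup hmeas hmono)) (iSup_le hlin))) ENNReal.ofReal_lt_top
  refine lintegral_congr fun x => ?_
  rw [Real.norm_of_nonneg (hW0 x), hsup x]

lemma main_equality (hv : ContDiff ℝ ∞ v) (heig : ∀ x, driftL v x = -lam * v x)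
    (hint : Integrable (fun x : Eu n => v x ^ 2 * rho x)) :
    Integrable (fun x : Eu n => ‖gradient v x‖ ^ 2 * rho x) ∧
    (∫ x : Eu n, ‖gradient v x‖ ^ 2 * rho x) = lam * ∫ x : Eu n, v x ^ 2 * rho x := by
  obtain ⟨C, hC0, hC⟩ := cut_fderiv_apply_bound (n := n)
  have hWc : Continuous (fun x : Eu n => ‖gradient v x‖ ^ 2 * rho x) :=
    (cont_gradnormsq hv).mul contDiff_rho.continuous
  have hW0 : ∀ x : Eu n, 0 ≤ ‖gradient v x‖ ^ 2 * rho x :=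
    fun x => mul_nonneg (sq_nonneg _) (rho_pos x).le
  have hRk : ∀ k : ℕ, (1:ℝ) ≤ (k:ℝ) + 1 := fun k => by
    have := Nat.cast_nonneg (α := ℝ) k
    linarith
  have hRk0 : ∀ k : ℕ, (0:ℝ) < (k:ℝ) + 1 := fun k => lt_of_lt_of_le one_pos (hRk k)
  have hMb : ∀ k : ℕ, ∫ x in Metric.ball (0 : Eu n) k, ‖gradient v x‖ ^ 2 * rho x
      ≤ 2 * |lam| * (∫ x : Eu n, v x ^ 2 * rho x)
        + 4 * C ^ 2 * (∫ x : Eu n, v x ^ 2 * rho x) := by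
    intro k
    have step1 : ∫ x in Metric.ball (0 : Eu n) k, ‖gradient v x‖ ^ 2 * rho x
        = ∫ x in Metric.ball (0 : Eu n) k,
            cut ((k:ℝ)+1) x ^ 2 * ‖gradient v x‖ ^ 2 * rho x := by
      refine setIntegral_congr_fun Metric.isOpen_ball.measurableSet fun x hx => ?_
      rw [Metric.mem_ball, dist_zero_right] at hx
      rw [cut_eq_one (hRk0 k) (by linarith)]
      ring
    rw [step1]
    calc ∫ x in Metric.ball (0 : Eu n) k,
          cut ((k:ℝ)+1) x ^ 2 * ‖gradient v x‖ ^ 2 * rho x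
        ≤ ∫ x : Eu n, cut ((k:ℝ)+1) x ^ 2 * ‖gradient v x‖ ^ 2 * rho x :=
          setIntegral_le_integral (int1 hv (hRk0 k)) (Filter.Eventually.of_forall fun x =>
            mul_nonneg (mul_nonneg (sq_nonneg _) (sq_nonneg _)) (rho_pos x).le)
      _ ≤ _ := uniform_bound hv heig hint hC0 hC (hRk k)
  have hWint : Integrable (fun x : Eu n => ‖gradient v x‖ ^ 2 * rho x) :=
    integrable_of_ball_bound hWc hW0 hMb
  refine ⟨hWint, ?_⟩
  -- limits along k → ∞ with R = k + 1
  have evone : ∀ x : Eu n, ∀ᶠ k : ℕ in atTop, ‖x‖ ≤ (k:ℝ) := by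
    intro x
    rw [Filter.eventually_atTop]
    exact ⟨⌈‖x‖⌉₊, fun k hk => le_trans (Nat.le_ceil _) (by exact_mod_cast hk)⟩
  have h1 : Tendsto (fun k : ℕ => ∫ x : Eu n,
      cut ((k:ℝ)+1) x ^ 2 * ‖gradient v x‖ ^ 2 * rho x) atTop
      (nhds (∫ x : Eu n, ‖gradient v x‖ ^ 2 * rho x)) := by
    apply tendsto_integral_of_dominated_convergence _
      (fun k => (int1 hv (hRk0 k)).aestronglyMeasurable) hWint
    · intro k
      refine Filter.Eventually.of_forall fun x => ?_
      have h2 : cut ((k:ℝ)+1) x ^ 2 ≤ 1 :=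
        pow_le_one₀ (cut_nonneg _ x) (cut_le_one _ x)
      rw [Real.norm_of_nonneg
        (mul_nonneg (mul_nonneg (sq_nonneg _) (sq_nonneg _)) (rho_pos x).le)]
      calc cut ((k:ℝ)+1) x ^ 2 * ‖gradient v x‖ ^ 2 * rho x
          ≤ 1 * ‖gradient v x‖ ^ 2 * rho x :=
            mul_le_mul_of_nonneg_right
              (mul_le_mul_of_nonneg_right h2 (sq_nonneg _)) (rho_pos x).le
        _ = ‖gradient v x‖ ^ 2 * rho x := by ring
    · refine Filter.Eventually.of_forall fun x => ?_
      refine Tendsto.congr' ?_ tendsto_const_nhds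
      filter_upwards [evone x] with k hk
      rw [cut_eq_one (hRk0 k) (by linarith)]
      ring
  have h2 : Tendsto (fun k : ℕ => ∫ x : Eu n,
      cut ((k:ℝ)+1) x ^ 2 * (v x) ^ 2 * rho x) atTop
      (nhds (∫ x : Eu n, v x ^ 2 * rho x)) := by
    apply tendsto_integral_of_dominated_convergence _
      (fun k => (int3 hv (hRk0 k)).aestronglyMeasurable) hint
    · intro k
      refine Filter.Eventually.of_forall fun x => ?_
      have hb : cut ((k:ℝ)+1) x ^ 2 ≤ 1 :=
        pow_le_one₀ (cut_nonneg _ x) (cut_le_one _ x)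
      rw [Real.norm_of_nonneg
        (mul_nonneg (mul_nonneg (sq_nonneg _) (sq_nonneg _)) (rho_pos x).le)]
      calc cut ((k:ℝ)+1) x ^ 2 * (v x) ^ 2 * rho x
          ≤ 1 * (v x) ^ 2 * rho x :=
            mul_le_mul_of_nonneg_right
              (mul_le_mul_of_nonneg_right hb (sq_nonneg _)) (rho_pos x).le
        _ = (v x) ^ 2 * rho x := by ring
    · refine Filter.Eventually.of_forall fun x => ?_
      refine Tendsto.congr' ?_ tendsto_const_nhds
      filter_upwards [evone x] with k hk
      rw [cut_eq_one (hRk0 k) (by linarith)]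
      ring
  have h3 : Tendsto (fun k : ℕ => ∫ x : Eu n,
      cut ((k:ℝ)+1) x * v x * (fderiv ℝ (cut ((k:ℝ)+1)) x (gradient v x)) * rho x) atTop
      (nhds 0) := by
    have h0 : (0:ℝ) = ∫ x : Eu n, (0:ℝ) := by simp
    rw [h0]
    apply tendsto_integral_of_dominated_convergence
      (fun x : Eu n => C / 2 * (v x ^ 2 * rho x + ‖gradient v x‖ ^ 2 * rho x))
      (fun k => (int2 hv (hRk0 k)).aestronglyMeasurable)
      ((hint.add hWint).const_mul (C / 2))
    · intro k
      refine Filter.Eventually.of_forall fun x => ?_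
      have hT := hC ((k:ℝ)+1) (hRk k) x (gradient v x)
      have hTC : |fderiv ℝ (cut ((k:ℝ)+1)) x (gradient v x)| ≤ C * ‖gradient v x‖ := by
        refine le_trans hT ?_
        apply mul_le_mul_of_nonneg_right _ (norm_nonneg _)
        exact div_le_self hC0 (hRk k)
      have hφ0 := cut_nonneg ((k:ℝ)+1) x
      have hφ1 := cut_le_one ((k:ℝ)+1) x
      have hρ := (rho_pos x).le
      have hvx := abs_nonneg (v x)
      have hg := norm_nonneg (gradient v x)
      rw [Real.norm_eq_abs, abs_mul]
      have e1 : |cut ((k:ℝ)+1) x * v x * fderiv ℝ (cut ((k:ℝ)+1)) x (gradient v x)|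
          ≤ |v x| * (C * ‖gradient v x‖) := by
        rw [abs_mul, abs_mul, abs_of_nonneg hφ0]
        calc cut ((k:ℝ)+1) x * |v x| * |fderiv ℝ (cut ((k:ℝ)+1)) x (gradient v x)|
            ≤ 1 * |v x| * (C * ‖gradient v x‖) := by
              apply mul_le_mul (mul_le_mul hφ1 le_rfl hvx zero_le_one) hTC
                (abs_nonneg _) (by positivity)
          _ = |v x| * (C * ‖gradient v x‖) := by ring
      rw [abs_of_nonneg hρ]
      calc |cut ((k:ℝ)+1) x * v x * fderiv ℝ (cut ((k:ℝ)+1)) x (gradient v x)| * rho x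
          ≤ (|v x| * (C * ‖gradient v x‖)) * rho x :=
            mul_le_mul_of_nonneg_right e1 hρ
        _ ≤ C / 2 * (v x ^ 2 * rho x + ‖gradient v x‖ ^ 2 * rho x) := by
            have key : 0 ≤ C * ((|v x| - ‖gradient v x‖) ^ 2 * rho x) :=
              mul_nonneg hC0 (mul_nonneg (sq_nonneg _) hρ)
            have e : C * ((|v x| - ‖gradient v x‖) ^ 2 * rho x)
                = C * (v x ^ 2 * rho x) + C * (‖gradient v x‖ ^ 2 * rho x)
                  - 2 * (|v x| * (C * ‖gradient v x‖) * rho x) := by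
              rw [← sq_abs (v x)]; ring
            rw [e] at key
            linarith
    · refine Filter.Eventually.of_forall fun x => ?_
      refine Tendsto.congr' ?_ tendsto_const_nhds
      filter_upwards [evone x] with k hk
      rw [cut_fderiv_zero (by linarith : ‖x‖ < (k:ℝ)+1)]
      simp
  have hidk : ∀ k : ℕ, (∫ x : Eu n, cut ((k:ℝ)+1) x ^ 2 * ‖gradient v x‖ ^ 2 * rho x)
      = lam * (∫ x : Eu n, cut ((k:ℝ)+1) x ^ 2 * (v x) ^ 2 * rho x)
        - 2 * ∫ x : Eu n,
            cut ((k:ℝ)+1) x * v x * (fderiv ℝ (cut ((k:ℝ)+1)) x (gradient v x)) * rho x :=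
    fun k => cutoff_identity hv heig (hRk k)
  have h4 : Tendsto (fun k : ℕ => ∫ x : Eu n,
      cut ((k:ℝ)+1) x ^ 2 * ‖gradient v x‖ ^ 2 * rho x) atTop
      (nhds (lam * (∫ x : Eu n, v x ^ 2 * rho x) - 2 * 0)) := by
    refine Tendsto.congr (fun k => (hidk k).symm) ?_
    exact (h2.const_mul lam).sub (h3.const_mul 2)
  have := tendsto_nhds_unique h1 h4
  rw [this]
  ring

end Main
end DriftPf

/-- weighted gradient estimate for drift Laplacian eigenfunctions. -/
theorem drift_laplacian_eigenfunction_gradient_estimate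
    {n : ℕ} (hn : 1 ≤ n)
    (v : EuclideanSpace ℝ (Fin n) → ℝ) (hv : ContDiff ℝ (⊤ : ℕ∞) v)
    (lam : ℝ) (heig : ∀ x, driftL v x = -lam * v x)
    (hint : Integrable (fun x : EuclideanSpace ℝ (Fin n) =>
      v x ^ 2 * Real.exp (-‖x‖ ^ 2 / 4))) :
    Integrable (fun x : EuclideanSpace ℝ (Fin n) =>
      ‖gradient v x‖ ^ 2 * Real.exp (-‖x‖ ^ 2 / 4)) ∧
    (∫ x : EuclideanSpace ℝ (Fin n), ‖gradient v x‖ ^ 2 * Real.exp (-‖x‖ ^ 2 / 4))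
      ≤ 2 * lam * ∫ x : EuclideanSpace ℝ (Fin n), v x ^ 2 * Real.exp (-‖x‖ ^ 2 / 4) ∧
    (v ≠ 0 → 0 ≤ lam) ∧
    (lam = 0 → ∀ x y, v x = v y) := by
  have hv' : ContDiff ℝ ((⊤ : ℕ∞) : WithTop ℕ∞) v := hv.of_le (by simp)
  have hint' : Integrable (fun x : EuclideanSpace ℝ (Fin n) =>
      v x ^ 2 * DriftPf.rho x) := hint
  obtain ⟨hWint, heq⟩ := DriftPf.main_equality hv' heig hint'
  have hW0i : 0 ≤ ∫ x : EuclideanSpace ℝ (Fin n), ‖gradient v x‖ ^ 2 * DriftPf.rho x :=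
    integral_nonneg fun x => mul_nonneg (sq_nonneg _) (DriftPf.rho_pos x).le
  have hK0 : 0 ≤ ∫ x : EuclideanSpace ℝ (Fin n), v x ^ 2 * DriftPf.rho x :=
    integral_nonneg fun x => mul_nonneg (sq_nonneg _) (DriftPf.rho_pos x).le
  refine ⟨hWint, ?_, ?_, ?_⟩
  · show (∫ x : EuclideanSpace ℝ (Fin n), ‖gradient v x‖ ^ 2 * DriftPf.rho x)
      ≤ 2 * lam * ∫ x : EuclideanSpace ℝ (Fin n), v x ^ 2 * DriftPf.rho x
    linarith [heq, hW0i]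
  · intro hv0
    by_contra hlam
    push_neg at hlam
    have hKz : (∫ x : EuclideanSpace ℝ (Fin n), v x ^ 2 * DriftPf.rho x) = 0 := by
      rcases hK0.lt_or_eq with h | h
      · have : lam * (∫ x : EuclideanSpace ℝ (Fin n), v x ^ 2 * DriftPf.rho x) < 0 :=
          mul_neg_of_neg_of_pos hlam h
        linarith
      · exact h.symm
    have hae := (integral_eq_zero_iff_of_nonneg
      (fun x => mul_nonneg (sq_nonneg _) (DriftPf.rho_pos x).le) hint').1 hKz
    have hzero : (fun x : EuclideanSpace ℝ (Fin n) => v x ^ 2 * DriftPf.rho x)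
        = fun _ => 0 :=
      (Continuous.ae_eq_iff_eq volume ((hv'.continuous.pow 2).mul
        DriftPf.contDiff_rho.continuous) continuous_const).1 hae
    apply hv0
    funext x
    have hx := congrFun hzero x
    have hρ := DriftPf.rho_pos x
    have hsq : v x ^ 2 = 0 := by
      rcases mul_eq_zero.1 hx with h | h
      · exact h
      · exact absurd h (ne_of_gt hρ)
    exact (pow_eq_zero_iff (two_ne_zero)).1 hsq
  · intro hl0
    rw [hl0, zero_mul] at heq
    have hae := (integral_eq_zero_iff_of_nonneg
      (fun x => mul_nonneg (sq_nonneg _) (DriftPf.rho_pos x).le) hWint).1 heq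
    have hzero : (fun x : EuclideanSpace ℝ (Fin n) => ‖gradient v x‖ ^ 2 * DriftPf.rho x)
        = fun _ => 0 :=
      (Continuous.ae_eq_iff_eq volume
        (((DriftPf.contDiff_gradient hv').continuous.norm.pow 2).mul
          DriftPf.contDiff_rho.continuous) continuous_const).1 hae
    have hgrad0 : ∀ x, gradient v x = 0 := by
      intro x
      have hx := congrFun hzero x
      have hρ := DriftPf.rho_pos x
      have h1 : ‖gradient v x‖ ^ 2 = 0 := by
        rcases mul_eq_zero.1 hx with h | h
        · exact h
        · exact absurd h (ne_of_gt hρ)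
      have h2 : ‖gradient v x‖ = 0 := (pow_eq_zero_iff (two_ne_zero)).1 h1
      exact norm_eq_zero.1 h2
    have hfz : ∀ x, fderiv ℝ v x = 0 := by
      intro x
      ext w
      have h := DriftPf.inner_gradient_eq v x w
      rw [← h, hgrad0 x]
      simp
    intro x y
    exact is_const_of_fderiv_eq_zero (hv'.differentiable (by simp)) hfz x y
end

section
/- Let u : ℝⁿ → ℝ be C¹ (n ≥ 1). Then the function r ↦ I(r) is differentiable on (0,∞) and I'(r) = 2 D(r)/r for every r > 0. Consequently, at every r > 0 where I(r) > 0, one has (log I)'(r) = 2 U(r)/r. -/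
open Filter Set MeasureTheory
open scoped RealInnerProductSpace

/-- The surface integral `∫_{∂B_r} g dσ` over the sphere of radius `r > 0` centered at the
origin of `ℝᵐ`, expressed by scaling the canonical surface measure (`volume.toSphere`)
of the unit sphere: `∫_{∂B_r} g dσ = r^{m−1} ∫_{∂B_1} g(rω) dσ₁(ω)`. -/
noncomputable def sphereIntegral {m : ℕ} (g : EuclideanSpace ℝ (Fin m) → ℝ) (r : ℝ) : ℝ :=
  r ^ ((m : ℤ) - 1) * ∫ ω : Metric.sphere (0 : EuclideanSpace ℝ (Fin m)) 1,
    g (r • (ω : EuclideanSpace ℝ (Fin m)))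
      ∂(volume : Measure (EuclideanSpace ℝ (Fin m))).toSphere

/-- The radial derivative `∂_r u (x) = ⟨∇u(x), x/|x|⟩`. -/
noncomputable def radialDeriv {m : ℕ} (u : EuclideanSpace ℝ (Fin m) → ℝ)
    (x : EuclideanSpace ℝ (Fin m)) : ℝ :=
  ⟪gradient u x, ‖x‖⁻¹ • x⟫

/-- `I(r) = r^{1−m} ∫_{∂B_r} u² dσ`. -/
noncomputable def freqI {m : ℕ} (u : EuclideanSpace ℝ (Fin m) → ℝ) (r : ℝ) : ℝ :=
  r ^ (1 - (m : ℤ)) * sphereIntegral (fun x => u x ^ 2) r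

/-- `D(r) = r^{2−m} ∫_{∂B_r} u ∂_r u dσ`. -/
noncomputable def freqD {m : ℕ} (u : EuclideanSpace ℝ (Fin m) → ℝ) (r : ℝ) : ℝ :=
  r ^ (2 - (m : ℤ)) * sphereIntegral (fun x => u x * radialDeriv u x) r

/-! Rescaling the sphere of radius `r` to the unit sphere, the weight `r^{1-n}` cancels the
Jacobian `r^{n-1}`, so `I(r) = ∫_{S^{n-1}} u(rω)² dσ(ω)`. The integrand is `C¹` in `r` with
derivative `2 u(rω) ∂_r u(rω)`, continuous on the compact set `[r-1, r+1] × S^{n-1}`, so one may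
differentiate under the integral sign; the result is `2 r^{-1} · r^{2-n} ∫_{∂B_r} u ∂_r u`. -/

section ParametricIntegral

variable {K E : Type*} [TopologicalSpace K] [CompactSpace K] [MeasurableSpace K]
  [OpensMeasurableSpace K] [NormedAddCommGroup E] [NormedSpace ℝ E]
  [SecondCountableTopologyEither K E] (μ : Measure K) [IsFiniteMeasure μ]

theorem hasDerivAt_integral_of_continuous_deriv {F F' : ℝ → K → E}
    (hF : ∀ ρ, Continuous (F ρ)) (hF' : Continuous (Function.uncurry F'))
    (hdiff : ∀ ρ ω, HasDerivAt (F · ω) (F' ρ ω) ρ) (r : ℝ) :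
    HasDerivAt (fun ρ => ∫ ω, F ρ ω ∂μ) (∫ ω, F' r ω ∂μ) r := by
  obtain ⟨C, hC⟩ := ((isCompact_closedBall r 1).prod isCompact_univ).exists_bound_of_continuousOn
    hF'.continuousOn
  exact (hasDerivAt_integral_of_dominated_loc_of_deriv_le (bound := fun _ => C)
    (Metric.closedBall_mem_nhds r one_pos) (.of_forall fun ρ => (hF ρ).aestronglyMeasurable)
    ((hF r).integrable_of_hasCompactSupport (.of_compactSpace _))
    (hF'.comp (Continuous.prodMk_right r)).aestronglyMeasurable
    (.of_forall fun ω ρ hρ => hC (ρ, ω) ⟨hρ, mem_univ ω⟩) (integrable_const C)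
    (.of_forall fun ω ρ _ => hdiff ρ ω)).2

variable {G : Type*} [NormedAddCommGroup G] [NormedSpace ℝ G]

theorem hasDerivAt_integral_comp_smul {g : G → E} (hg : ContDiff ℝ 1 g) {v : K → G}
    (hv : Continuous v) (r : ℝ) :
    HasDerivAt (fun ρ => ∫ ω, g (ρ • v ω) ∂μ) (∫ ω, fderiv ℝ g (r • v ω) (v ω) ∂μ) r := by
  have hsmul : Continuous fun p : ℝ × K => p.1 • v p.2 :=
    continuous_fst.smul (hv.comp continuous_snd)
  refine hasDerivAt_integral_of_continuous_deriv μ (F' := fun ρ ω => fderiv ℝ g (ρ • v ω) (v ω))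
    (fun ρ => hg.continuous.comp (continuous_const.smul hv))
    (((hg.continuous_fderiv one_ne_zero).comp hsmul).clm_apply (hv.comp continuous_snd))
    (fun ρ ω => ?_) r
  have hline : HasDerivAt (fun ρ' : ℝ => ρ' • v ω) (v ω) ρ := by
    simpa using (hasDerivAt_id ρ).smul_const (v ω)
  exact (hg.differentiable one_ne_zero _).hasFDerivAt.comp_hasDerivAt ρ hline

end ParametricIntegral

theorem fderiv_sq_apply {G : Type*} [NormedAddCommGroup G] [NormedSpace ℝ G] {u : G → ℝ}
    {x : G} (hu : DifferentiableAt ℝ u x) (v : G) :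
    fderiv ℝ (fun y => u y ^ 2) x v = 2 * (u x * fderiv ℝ u x v) := by
  rw [(hu.hasFDerivAt.pow 2).fderiv]
  simp only [Nat.add_one_sub_one, pow_one, nsmul_eq_mul, Nat.cast_ofNat, smul_apply, smul_eq_mul]
  ring

section Frequency

variable {m : ℕ} (u : EuclideanSpace ℝ (Fin m) → ℝ)

theorem freqI_eq_integral {r : ℝ} (hr : r ≠ 0) :
    freqI u r = ∫ ω, u (r • ω.1) ^ 2 ∂(volume : Measure (EuclideanSpace ℝ (Fin m))).toSphere := by
  rw [freqI, sphereIntegral, ← mul_assoc, ← zpow_add₀ hr]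
  simp only [sub_add_sub_cancel, sub_self, zpow_zero, one_mul]

theorem freqD_eq_mul_integral {r : ℝ} (hr : r ≠ 0) :
    freqD u r = r * ∫ ω, u (r • ω.1) * radialDeriv u (r • ω.1)
      ∂(volume : Measure (EuclideanSpace ℝ (Fin m))).toSphere := by
  rw [freqD, sphereIntegral, ← mul_assoc, ← zpow_add₀ hr]
  simp only [sub_add_sub_cancel, Int.reduceSub, zpow_one]

theorem radialDeriv_smul_of_norm_eq_one {x : EuclideanSpace ℝ (Fin m)} (hx : ‖x‖ = 1)
    {r : ℝ} (hr : 0 < r) : radialDeriv u (r • x) = fderiv ℝ u (r • x) x := by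
  rw [radialDeriv, norm_smul, hx, mul_one, Real.norm_of_nonneg hr.le, smul_smul,
    inv_mul_cancel₀ hr.ne', one_smul, inner_gradient_left]

end Frequency

theorem freqI_hasDerivAt_general
    {n : ℕ}
    (u : EuclideanSpace ℝ (Fin n) → ℝ) (hu : ContDiff ℝ 1 u) :
    (∀ r : ℝ, 0 < r → HasDerivAt (freqI u) (2 * freqD u r / r) r) ∧
    (∀ r : ℝ, 0 < r → 0 < freqI u r →
      HasDerivAt (fun ρ => Real.log (freqI u ρ)) (2 * (freqD u r / freqI u r) / r) r) := by
  set σ := (volume : Measure (EuclideanSpace ℝ (Fin n))).toSphere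
  have hI : ∀ r : ℝ, 0 < r → HasDerivAt (freqI u) (2 * freqD u r / r) r := by
    intro r hr
    have hmean := hasDerivAt_integral_comp_smul σ (hu.pow 2) continuous_subtype_val r
    refine (hmean.congr_deriv ?_).congr_of_eventuallyEq ?_
    · calc _ = ∫ ω, 2 * (u (r • ω.1) * radialDeriv u (r • ω.1)) ∂σ := by
            refine integral_congr_ae (.of_forall fun ω => ?_)
            dsimp only
            rw [fderiv_sq_apply (hu.differentiable one_ne_zero _),
              radialDeriv_smul_of_norm_eq_one u (norm_eq_of_mem_sphere ω) hr]
        _ = 2 * freqD u r / r := by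
            rw [integral_const_mul, freqD_eq_mul_integral u hr.ne', mul_div_assoc,
              mul_div_cancel_left₀ _ hr.ne']
    · filter_upwards [Ioi_mem_nhds hr] with ρ hρ using freqI_eq_integral u (ne_of_gt hρ)
  refine ⟨hI, fun r hr hIpos => ?_⟩
  exact ((Real.hasDerivAt_log hIpos.ne').comp r (hI r hr)).congr_deriv (by ring)

/-- `I` is differentiable on `(0,∞)` with `I'(r) = 2 D(r)/r`; consequently
`(log I)'(r) = 2 U(r)/r` wherever `I(r) > 0`. -/
theorem freqI_hasDerivAt
    {n : ℕ} (hn : 1 ≤ n)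
    (u : EuclideanSpace ℝ (Fin n) → ℝ) (hu : ContDiff ℝ 1 u) :
    (∀ r : ℝ, 0 < r → HasDerivAt (freqI u) (2 * freqD u r / r) r) ∧
    (∀ r : ℝ, 0 < r → 0 < freqI u r →
      HasDerivAt (fun ρ => Real.log (freqI u ρ)) (2 * (freqD u r / freqI u r) / r) r) :=
  freqI_hasDerivAt_general u hu
end
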